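/- arXiv:1611.04742 — 12 statements merged into one kernel-verified Lean document; each statement's English description precedes it below -/
import Mathlib

section
/- Let A and B be unital C*-algebras and let Φ : A → B be a completely positive linear map with operator norm ‖Φ‖ ≤ 1. Then for every a ∈ A one has the Schwarz inequality Φ(a)*Φ(a) ≤ Φ(a*a) in B. -/
open scoped Matrix

/-- A map between star rings is *completely positive* if, for every `n`, applying it
entrywise to `n × n` matrices sends positive elements (i.e. those of the form `Nᴴ * N`)
of the matrix ring over the domain to positive elements of the matrix ring over the
codomain. -/
def CompletelyPositive {A B : Type*} [NonUnitalNonAssocSemiring A] [StarRing A]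
    [NonUnitalNonAssocSemiring B] [StarRing B] (Φ : A → B) : Prop :=
  ∀ n : ℕ, ∀ M : Matrix (Fin n) (Fin n) A,
    (∃ N : Matrix (Fin n) (Fin n) A, M = Nᴴ * N) →
      ∃ P : Matrix (Fin n) (Fin n) B, M.map Φ = Pᴴ * P

/-!
Complete positivity applied to `[[1, a], [a⋆, a⋆a]] = Nᴴ N` with `N = [[1, a], [0, 0]]` writes
`Φ 1`, `Φ a`, `Φ (a⋆a)` as the Gram entries `⟨u, u⟩`, `⟨u, v⟩`, `⟨v, v⟩` of two columns `u`, `v`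
of a matrix over `B`, where `⟨x, y⟩ = ∑ₖ xₖ⋆ yₖ`. Since `‖Φ‖ ≤ 1`, the positive element `Φ 1` is
at most `1`, and then for `b = ⟨u, v⟩`:
`0 ≤ ⟨v - u b, v - u b⟩ = ⟨v, v⟩ - 2 b⋆b + b⋆ ⟨u, u⟩ b ≤ ⟨v, v⟩ - b⋆b`.
-/

theorem star_mul_self_le_of_sum_star_mul_self_le_one {R ι : Type*} [Ring R] [StarRing R]
    [PartialOrder R] [StarOrderedRing R] [Fintype ι] (u v : ι → R)
    (hu : ∑ i, star (u i) * u i ≤ 1) :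
    star (∑ i, star (u i) * v i) * ∑ i, star (u i) * v i ≤ ∑ i, star (v i) * v i := by
  have hexpand (c : R) : ∑ i, star (v i - u i * c) * (v i - u i * c) =
      ∑ i, star (v i) * v i - star (∑ i, star (u i) * v i) * c - star c * ∑ i, star (u i) * v i
        + star c * (∑ i, star (u i) * u i) * c := by
    simp only [star_sub, star_mul, star_star, star_sum, sub_mul, mul_sub, Finset.sum_sub_distrib,
      Finset.mul_sum, Finset.sum_mul, mul_assoc]
    abel
  set b := ∑ i, star (u i) * v i
  have hconj : star b * (∑ i, star (u i) * u i) * b ≤ star b * b := by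
    simpa using star_left_conjugate_le_conjugate hu b
  rw [← sub_nonneg]
  calc 0 ≤ ∑ i, star (v i - u i * b) * (v i - u i * b) :=
        Finset.sum_nonneg fun i _ ↦ star_mul_self_nonneg _
    _ ≤ ∑ i, star (v i) * v i - star b * b - star b * b + star b * b := by
      rw [hexpand]; gcongr
    _ = _ := by abel

theorem CStarRing.norm_one_le {E : Type*} [NormedRing E] [StarRing E] [CStarRing E] :
    ‖(1 : E)‖ ≤ 1 := by
  rcases subsingleton_or_nontrivial E with hE | hE
  · simp [Subsingleton.elim (1 : E) 0]
  · exact CStarRing.norm_one.le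

theorem ContinuousLinearMap.map_one_le_one_of_nonneg {A B : Type*}
    [NormedRing A] [StarRing A] [CStarRing A] [NormedAlgebra ℂ A]
    [CStarAlgebra B] [PartialOrder B] [StarOrderedRing B]
    (Φ : A →L[ℂ] B) (hnorm : ‖Φ‖ ≤ 1) (hpos : 0 ≤ Φ 1) : Φ 1 ≤ 1 := by
  rw [← CStarAlgebra.norm_le_one_iff_of_nonneg _ hpos]
  calc ‖Φ 1‖ ≤ ‖Φ‖ * ‖(1 : A)‖ := Φ.le_opNorm 1
    _ ≤ 1 * 1 := by gcongr; exact CStarRing.norm_one_le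
    _ = 1 := one_mul 1

theorem schwarz_inequality_of_completelyPositive_general {A B : Type*}
    [NormedRing A] [StarRing A] [CStarRing A]
    [NormedAlgebra ℂ A]
    [NormedRing B] [StarRing B] [CStarRing B] [CompleteSpace B]
    [NormedAlgebra ℂ B] [StarModule ℂ B] [PartialOrder B] [StarOrderedRing B]
    (Φ : A →L[ℂ] B) (hnorm : ‖Φ‖ ≤ 1) (hcp : CompletelyPositive (⇑Φ)) (a : A) :
    star (Φ a) * Φ a ≤ Φ (star a * a) := by
  let _ : CStarAlgebra B := ⟨⟩
  obtain ⟨P, hP⟩ := hcp 2 !![1, a; star a, star a * a] ⟨!![1, a; 0, 0], by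
    ext i j
    fin_cases i <;> fin_cases j <;> simp [Matrix.mul_apply]⟩
  have hgram (i j : Fin 2) :
      Φ (!![1, a; star a, star a * a] i j) = ∑ k, star (P k i) * P k j := by
    simpa [Matrix.mul_apply] using congrFun (congrFun hP i) j
  have hΦ1 : Φ 1 = ∑ k, star (P k 0) * P k 0 := hgram 0 0
  have hΦa : Φ a = ∑ k, star (P k 0) * P k 1 := hgram 0 1
  have hΦaa : Φ (star a * a) = ∑ k, star (P k 1) * P k 1 := hgram 1 1
  have hpos : 0 ≤ Φ 1 := hΦ1 ▸ Finset.sum_nonneg fun k _ ↦ star_mul_self_nonneg (P k 0)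
  rw [hΦa, hΦaa]
  exact star_mul_self_le_of_sum_star_mul_self_le_one _ _
    (hΦ1 ▸ Φ.map_one_le_one_of_nonneg hnorm hpos)

/-- **The Schwarz inequality.** If `Φ : A → B` is a completely positive linear map between
unital C*-algebras with `‖Φ‖ ≤ 1`, then `Φ(a)* Φ(a) ≤ Φ(a* a)` for every `a ∈ A`. -/
theorem schwarz_inequality_of_completelyPositive {A B : Type*}
    [NormedRing A] [StarRing A] [CStarRing A] [CompleteSpace A]
    [NormedAlgebra ℂ A] [StarModule ℂ A]
    [NormedRing B] [StarRing B] [CStarRing B] [CompleteSpace B]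
    [NormedAlgebra ℂ B] [StarModule ℂ B] [PartialOrder B] [StarOrderedRing B]
    (Φ : A →L[ℂ] B) (hnorm : ‖Φ‖ ≤ 1) (hcp : CompletelyPositive (⇑Φ)) (a : A) :
    star (Φ a) * Φ a ≤ Φ (star a * a) :=
  schwarz_inequality_of_completelyPositive_general Φ hnorm hcp a
end

section
/- Let A and B be unital C*-algebras, let Φ : A → B be a completely positive linear map with operator norm ‖Φ‖ ≤ 1, and let a ∈ A. Then: (i) Φ(a*a) = Φ(a)*Φ(a) if and only if Φ(ba) = Φ(b)Φ(a) for all b ∈ A; and (ii) Φ(aa*) = Φ(a)Φ(a)* if and only if Φ(ab) = Φ(a)Φ(b) for all b ∈ A. -/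
open scoped Matrix

section aux
set_option linter.unusedSectionVars false
variable {A B : Type*}
    [NormedRing A] [StarRing A] [CStarRing A] [CompleteSpace A]
    [NormedAlgebra ℂ A] [StarModule ℂ A]
    [NormedRing B] [StarRing B] [CStarRing B] [CompleteSpace B]
    [NormedAlgebra ℂ B] [StarModule ℂ B]
    (Φ : A →L[ℂ] B)

/-- Gram matrices are mapped to Gram matrices. -/
lemma cp_gram (hcp : CompletelyPositive (⇑Φ)) (n : ℕ) [NeZero n] (z : Fin n → A) :
    ∃ P : Matrix (Fin n) (Fin n) B,
      ∀ i j, Φ (star (z i) * z j) = ∑ k, star (P k i) * P k j := by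
  obtain ⟨P, hP⟩ := hcp n (Matrix.of fun i j => star (z i) * z j)
    ⟨Matrix.of fun i j => if i = 0 then z j else 0, by
      ext i j
      simp only [Matrix.mul_apply, Matrix.conjTranspose_apply, Matrix.of_apply]
      rw [Finset.sum_eq_single 0]
      · simp
      · intro k _ hk; simp [hk]
      · simp⟩
  refine ⟨P, fun i j => ?_⟩
  have := congrFun (congrFun hP i) j
  simpa [Matrix.map_apply, Matrix.mul_apply, Matrix.conjTranspose_apply] using this

section order
variable [PartialOrder B] [StarOrderedRing B]

lemma cp_compress (hcp : CompletelyPositive (⇑Φ)) (n : ℕ) [NeZero n]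
    (z : Fin n → A) (v : Fin n → B) :
    0 ≤ ∑ i, ∑ j, star (v i) * Φ (star (z i) * z j) * v j := by
  obtain ⟨P, hP'⟩ := cp_gram Φ hcp n z
  have e1 : ∀ i j, star (v i) * Φ (star (z i) * z j) * v j
      = ∑ k, star (P k i * v i) * (P k j * v j) := by
    intro i j
    rw [hP', Finset.mul_sum, Finset.sum_mul]
    refine Finset.sum_congr rfl fun k _ => ?_
    simp only [star_mul, mul_assoc]
  have key : ∑ i, ∑ j, star (v i) * Φ (star (z i) * z j) * v j
      = ∑ k, star (∑ i, P k i * v i) * (∑ j, P k j * v j) := by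
    simp_rw [e1, star_sum, Finset.sum_mul, Finset.mul_sum]
    conv_lhs => enter [2, i]; rw [Finset.sum_comm]
    rw [Finset.sum_comm]
  rw [key]
  exact Finset.sum_nonneg fun k _ => star_mul_self_nonneg _

end order

lemma cp_star_map (hcp : CompletelyPositive (⇑Φ)) (x : A) :
    Φ (star x) = star (Φ x) := by
  obtain ⟨P, hP⟩ := cp_gram Φ hcp 2 ![x, 1]
  have h01 := hP 0 1
  have h10 := hP 1 0
  simp only [Matrix.cons_val_zero, Matrix.cons_val_one, Matrix.head_cons, mul_one, star_one,
    one_mul] at h01 h10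
  rw [h01, h10]
  simp [star_sum, star_mul]

section order
variable [PartialOrder B] [StarOrderedRing B]

lemma cp_one_nonneg (hcp : CompletelyPositive (⇑Φ)) : (0:B) ≤ Φ 1 := by
  have := cp_compress Φ hcp 1 ![1] ![1]
  simpa using this

lemma cp_one_le (hnorm : ‖Φ‖ ≤ 1) (hcp : CompletelyPositive (⇑Φ)) : Φ 1 ≤ (1:B) := by
  letI : CStarAlgebra B := ⟨⟩
  have hA : ‖(1:A)‖ ≤ 1 := by
    have h := CStarRing.norm_star_mul_self (x := (1:A))
    simp only [star_one, one_mul] at h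
    nlinarith [norm_nonneg (1:A)]
  have h1n : ‖Φ (1:A)‖ ≤ 1 := by
    calc ‖Φ (1:A)‖ ≤ ‖Φ‖ * ‖(1:A)‖ := Φ.le_opNorm 1
      _ ≤ 1 := by nlinarith [norm_nonneg Φ, norm_nonneg (1:A)]
  have hsa : IsSelfAdjoint (Φ (1:A)) := .of_nonneg (cp_one_nonneg Φ hcp)
  have hle := hsa.le_algebraMap_norm_self
  refine hle.trans ?_
  rw [← sub_nonneg]
  have : (1:B) - algebraMap ℝ B ‖Φ (1:A)‖
      = star (algebraMap ℝ B (Real.sqrt (1 - ‖Φ (1:A)‖)))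
        * algebraMap ℝ B (Real.sqrt (1 - ‖Φ (1:A)‖)) := by
    rw [IsSelfAdjoint.star_eq (IsSelfAdjoint.algebraMap B (isSelfAdjoint_iff.mpr rfl)),
      ← map_mul, Real.mul_self_sqrt (by linarith), map_sub, RingHom.map_one]
  rw [this]
  exact star_mul_self_nonneg _

lemma cp_quad (hnorm : ‖Φ‖ ≤ 1) (hcp : CompletelyPositive (⇑Φ)) (x y : A) (u v : B) :
    0 ≤ star u * (Φ (star x * x) - star (Φ x) * Φ x) * u
      + star u * (Φ (star x * y) - star (Φ x) * Φ y) * v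
      + star v * (Φ (star y * x) - star (Φ y) * Φ x) * u
      + star v * (Φ (star y * y) - star (Φ y) * Φ y) * v := by
  have hstar := cp_star_map Φ hcp
  have h1s : star (Φ (1:A)) = Φ 1 := by rw [← hstar, star_one]
  have hS := cp_compress Φ hcp 3 ![x, y, 1] ![u, v, -(Φ x * u + Φ y * v)]
  simp only [Fin.sum_univ_three, Matrix.cons_val_zero, Matrix.cons_val_one, Matrix.head_cons,
    Matrix.cons_val_two, Matrix.tail_cons, star_one, one_mul, mul_one, hstar, h1s] at hS
  have hconj : 0 ≤ star (Φ x * u + Φ y * v) * ((1:B) - Φ 1) * (Φ x * u + Φ y * v) :=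
    star_left_conjugate_nonneg (by rw [sub_nonneg]; exact cp_one_le Φ hnorm hcp) _
  refine (add_nonneg hS hconj).trans (le_of_eq ?_)
  simp only [star_add, star_mul, star_neg, star_star]
  noncomm_ring

lemma quad_zero {c d : B} (hq : ∀ s : ℝ, (2 * s) • (c * star c) ≤ d) : c = 0 := by
  letI : CStarAlgebra B := ⟨⟩
  by_contra hc
  have hcc : (0:ℝ) < ‖c * star c‖ := by
    rw [CStarRing.norm_self_mul_star]
    exact mul_pos (norm_pos_iff.mpr hc) (norm_pos_iff.mpr hc)
  set s : ℝ := (‖d‖ + 1) / (2 * ‖c * star c‖) with hs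
  have hspos : 0 < s := by positivity
  have h0 : (0:B) ≤ (2 * s) • (c * star c) :=
    smul_nonneg (by positivity) (mul_star_self_nonneg c)
  have hn := CStarAlgebra.norm_le_norm_of_nonneg_of_le h0 (hq s)
  rw [norm_smul, Real.norm_eq_abs, abs_of_pos (by positivity)] at hn
  have harith : 2 * s * ‖c * star c‖ = ‖d‖ + 1 := by
    rw [hs]; field_simp
  rw [harith] at hn
  linarith

lemma cp_key (hnorm : ‖Φ‖ ≤ 1) (hcp : CompletelyPositive (⇑Φ)) {a : A}
    (h : Φ (star a * a) = star (Φ a) * Φ a) (b : A) :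
    Φ (star b * a) = star (Φ b) * Φ a := by
  have hstar := cp_star_map Φ hcp
  rw [← sub_eq_zero]
  set c : B := Φ (star b * a) - star (Φ b) * Φ a with hc
  have hsc : Φ (star a * b) - star (Φ a) * Φ b = star c := by
    have h2 : star (Φ (star b * a)) = Φ (star a * b) := by
      rw [← hstar, star_mul, star_star]
    rw [hc, star_sub, h2, star_mul, star_star]
  refine quad_zero (d := Φ (star b * b) - star (Φ b) * Φ b) (fun s => ?_)
  have hq := cp_quad Φ hnorm hcp a b (-(s • star c)) 1
  rw [h, sub_self, hsc, ← hc] at hq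
  simp only [mul_zero, zero_mul, mul_one, one_mul, star_one, star_neg, star_smul,
    star_star, star_trivial, neg_mul, smul_mul_assoc, mul_neg, mul_smul_comm,
    smul_zero, neg_zero, zero_add, add_zero] at hq
  rw [← sub_nonneg]
  exact hq.trans_eq (by module)

end order
end aux

/-- **The multiplicativity property (Choi).** Let `Φ : A → B` be a completely positive
linear map between unital C*-algebras with `‖Φ‖ ≤ 1` and let `a ∈ A`. Then
(i) `Φ(a*a) = Φ(a)*Φ(a)` iff `Φ(ba) = Φ(b)Φ(a)` for all `b`, and
(ii) `Φ(aa*) = Φ(a)Φ(a)*` iff `Φ(ab) = Φ(a)Φ(b)` for all `b`. -/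
theorem multiplicativity_of_completelyPositive {A B : Type*}
    [NormedRing A] [StarRing A] [CStarRing A] [CompleteSpace A]
    [NormedAlgebra ℂ A] [StarModule ℂ A]
    [NormedRing B] [StarRing B] [CStarRing B] [CompleteSpace B]
    [NormedAlgebra ℂ B] [StarModule ℂ B]
    (Φ : A →L[ℂ] B) (hnorm : ‖Φ‖ ≤ 1) (hcp : CompletelyPositive (⇑Φ)) (a : A) :
    (Φ (star a * a) = star (Φ a) * Φ a ↔ ∀ b : A, Φ (b * a) = Φ b * Φ a) ∧
    (Φ (a * star a) = Φ a * star (Φ a) ↔ ∀ b : A, Φ (a * b) = Φ a * Φ b) := by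
  letI : CStarAlgebra B := ⟨⟩
  letI := CStarAlgebra.spectralOrder B
  haveI := CStarAlgebra.spectralOrderedRing B
  have hstar := cp_star_map Φ hcp
  constructor
  · constructor
    · intro h b
      have h2 := cp_key Φ hnorm hcp h (star b)
      rwa [star_star, hstar, star_star] at h2
    · intro h
      rw [h (star a), hstar]
  · constructor
    · intro h b
      have h' : Φ (star (star a) * star a) = star (Φ (star a)) * Φ (star a) := by
        rw [star_star, hstar, star_star, h]
      have h2 := cp_key Φ hnorm hcp h' b
      calc Φ (a * b) = star (Φ (star b * star a)) := by
            rw [← hstar, star_mul, star_star, star_star]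
        _ = star (star (Φ b) * Φ (star a)) := by rw [h2]
        _ = Φ a * Φ b := by rw [star_mul, star_star, hstar, star_star]
    · intro h
      rw [h (star a), hstar]
end

section
/- Let A and B be unital C*-algebras and let Φ : A → B be a completely positive linear map with operator norm ‖Φ‖ ≤ 1. Then the multiplicative domain M_Φ is a norm-closed star-subalgebra of A, the restriction of Φ to M_Φ is multiplicative (Φ(xy) = Φ(x)Φ(y) for all x, y ∈ M_Φ), and every star-subalgebra C of A on which Φ is multiplicative is contained in M_Φ; thus M_Φ is the largest C*-subalgebra of A on which Φ restricts to a *-homomorphism. -/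
/-!
By 2-positivity and `Φ 1 ≤ 1`, `Φ` satisfies the Kadison–Schwarz inequality
`Φ(a)* Φ(a) ≤ Φ(a* a)`, i.e. `(x, y) ↦ Φ(x* y) - Φ(x)* Φ(y)` is a positive semidefinite
`B`-valued sesquilinear form. As for scalar forms, such a form vanishes on the row of any `a`
on whose diagonal it vanishes. Hence `a ∈ M_Φ` iff `Φ(ab) = Φ(a)Φ(b)` and `Φ(ba) = Φ(b)Φ(a)`
for all `b`, which makes `M_Φ` a star-subalgebra; maximality is immediate from `Φ(x*) = Φ(x)*`.
-/

open scoped Matrix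

/-- The *multiplicative domain* of a map `Φ` between C*-algebras:
`M_Φ = {a | Φ(a*a) = Φ(a)*Φ(a) and Φ(aa*) = Φ(a)Φ(a)*}`. -/
def multDomain {A B : Type*} [NonUnitalNonAssocSemiring A] [StarRing A]
    [NonUnitalNonAssocSemiring B] [StarRing B] (Φ : A → B) : Set A :=
  {a | Φ (star a * a) = star (Φ a) * Φ a ∧ Φ (a * star a) = Φ a * star (Φ a)}


lemma LinearMap.map_star_of_isSelfAdjoint {E F : Type*} [AddCommGroup E] [Module ℂ E]
    [StarAddMonoid E] [StarModule ℂ E] [AddCommGroup F] [Module ℂ F] [StarAddMonoid F]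
    [StarModule ℂ F] (f : E →ₗ[ℂ] F) (hf : ∀ a, IsSelfAdjoint a → IsSelfAdjoint (f a)) (x : E) :
    f (star x) = star (f x) := by
  have hre := hf _ (realPart x).2
  have him := hf _ (imaginaryPart x).2
  rw [← realPart_add_I_smul_imaginaryPart x]
  simp [(realPart x).2.star_eq, (imaginaryPart x).2.star_eq, hre.star_eq, him.star_eq]

lemma LinearMap.apply_eq_zero_of_apply_self_eq_zero {E B : Type*} [AddCommGroup E] [Module ℂ E]
    [CStarAlgebra B] [PartialOrder B] [StarOrderedRing B]
    (T : E →ₗ⋆[ℂ] E →ₗ[ℂ] B) (hT : ∀ x, 0 ≤ T x x) {a : E} (ha : T a a = 0) (b : E) :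
    T a b = 0 := by
  have hsym_nonneg : ∀ b, 0 ≤ T a b + T b a := by
    intro b
    have hpos : ∀ t : ℝ, 0 < t → 0 ≤ T a b + T b a + t • T b b := by
      intro t ht
      have hexp : T (a + (t : ℂ) • b) (a + (t : ℂ) • b) = t • (T a b + T b a + t • T b b) := by
        simp only [map_add, map_smulₛₗ, LinearMap.add_apply, LinearMap.smul_apply, ha,
          Complex.conj_ofReal, RingHom.id_apply]
        simp only [Complex.coe_smul, smul_add, smul_smul]
        abel
      have h := hT (a + (t : ℂ) • b)
      rw [hexp] at h
      simpa [smul_smul, ht.ne'] using smul_nonneg (inv_nonneg.mpr ht.le) h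
    refine ge_of_tendsto (x := nhdsWithin (0 : ℝ) (Set.Ioi 0)) ?_
      (eventually_nhdsWithin_of_forall hpos)
    exact ((continuous_const.add (continuous_id.smul continuous_const)).tendsto' 0 _
      (by simp)).mono_left nhdsWithin_le_nhds
  have hsym : ∀ b, T a b + T b a = 0 := by
    intro b
    have hneg := hsym_nonneg (-b)
    rw [map_neg, map_neg, LinearMap.neg_apply, ← neg_add, neg_nonneg] at hneg
    exact le_antisymm hneg (hsym_nonneg b)
  have hantisym : T a b - T b a = 0 := by
    simpa [smul_eq_zero, Complex.I_ne_zero, ← sub_eq_add_neg, ← smul_sub]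
      using hsym (Complex.I • b)
  have h2 : (2 : ℂ) • T a b = (T a b + T b a) + (T a b - T b a) := by rw [two_smul]; abel
  simpa [hsym b, hantisym] using h2

section Defect

variable {A B : Type*} [Ring A] [StarRing A] [Algebra ℂ A] [StarModule ℂ A]
  [Ring B] [StarRing B] [Algebra ℂ B] [StarModule ℂ B]

def schwarzDefect (Φ : A →ₗ[ℂ] B) : A →ₗ⋆[ℂ] A →ₗ[ℂ] B :=
  LinearMap.mk₂'ₛₗ (starRingEnd ℂ) (RingHom.id ℂ)
    (fun x y => Φ (star x * y) - star (Φ x) * Φ y)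
    (fun x x' y => by simp only [star_add, add_mul, map_add]; abel)
    (fun c x y => by simp [smul_sub])
    (fun x y y' => by simp only [mul_add, map_add]; abel)
    (fun c x y => by simp [smul_sub])

@[simp]
lemma schwarzDefect_apply (Φ : A →ₗ[ℂ] B) (x y : A) :
    schwarzDefect Φ x y = Φ (star x * y) - star (Φ x) * Φ y :=
  rfl

end Defect

section MultDomain

variable {A B : Type*}

lemma isClosed_multDomain [NonUnitalNonAssocSemiring A] [StarRing A] [TopologicalSpace A]
    [ContinuousStar A] [ContinuousMul A] [NonUnitalNonAssocSemiring B] [StarRing B]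
    [TopologicalSpace B] [ContinuousStar B] [ContinuousMul B] [T2Space B] {Φ : A → B}
    (hΦ : Continuous Φ) : IsClosed (multDomain Φ) :=
  (isClosed_eq (hΦ.comp (continuous_star.mul continuous_id)) (hΦ.star.mul hΦ)).inter
    (isClosed_eq (hΦ.comp (continuous_id.mul continuous_star)) (hΦ.mul hΦ.star))

lemma star_mem_multDomain [NonUnitalNonAssocSemiring A] [StarRing A]
    [NonUnitalNonAssocSemiring B] [StarRing B] {Φ : A → B}
    (hΦ : ∀ x, Φ (star x) = star (Φ x)) {x : A} (hx : x ∈ multDomain Φ) :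
    star x ∈ multDomain Φ :=
  ⟨by simpa [hΦ] using hx.2, by simpa [hΦ] using hx.1⟩

lemma subset_multDomain [NonUnitalNonAssocSemiring A] [StarRing A]
    [NonUnitalNonAssocSemiring B] [StarRing B] {Φ : A → B}
    (hΦ : ∀ x, Φ (star x) = star (Φ x)) {C : Set A} (hC : ∀ x ∈ C, star x ∈ C)
    (hmul : ∀ x ∈ C, ∀ y ∈ C, Φ (x * y) = Φ x * Φ y) : C ⊆ multDomain Φ := fun x hx =>
  ⟨by rw [hmul _ (hC x hx) x hx, hΦ], by rw [hmul x hx _ (hC x hx), hΦ]⟩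

lemma smul_mem_multDomain [Ring A] [StarRing A] [Algebra ℂ A] [StarModule ℂ A]
    [Ring B] [StarRing B] [Algebra ℂ B] [StarModule ℂ B] {Φ : A →ₗ[ℂ] B}
    (c : ℂ) {x : A} (hx : x ∈ multDomain Φ) : c • x ∈ multDomain Φ := by
  constructor <;>
  simp only [star_smul, smul_mul_smul_comm, map_smul, hx.1, hx.2]

end MultDomain

namespace CompletelyPositive

lemma isSelfAdjoint_map_star_mul_self {A B : Type*} [NonUnitalNonAssocSemiring A] [StarRing A]
    [NonUnitalNonAssocSemiring B] [StarRing B] {Φ : A → B} (hcp : CompletelyPositive Φ) (c : A) :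
    IsSelfAdjoint (Φ (star c * c)) := by
  obtain ⟨P, hP⟩ := hcp 1 (!![c]ᴴ * !![c]) ⟨_, rfl⟩
  have h : Φ (star c * c) = star (P 0 0) * P 0 0 := by
    simpa [Matrix.mul_apply] using congrFun (congrFun hP 0) 0
  exact h ▸ IsSelfAdjoint.star_mul_self _

lemma map_star {A B : Type*} [Ring A] [StarRing A] [Algebra ℂ A] [StarModule ℂ A]
    [Ring B] [StarRing B] [Module ℂ B] [StarModule ℂ B] {Φ : A →ₗ[ℂ] B}
    (hcp : CompletelyPositive Φ) (x : A) : Φ (star x) = star (Φ x) := by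
  refine Φ.map_star_of_isSelfAdjoint (fun a ha => ?_) x
  have hdiff : (4 : ℂ) • a = star (1 + a) * (1 + a) - star (1 - a) * (1 - a) := by
    rw [star_add, star_sub, star_one, ha.star_eq, Algebra.smul_def, map_ofNat]
    noncomm_ring
  have h4 : IsSelfAdjoint ((4 : ℂ) • Φ a) := by
    rw [← map_smul, hdiff, map_sub]
    exact (hcp.isSelfAdjoint_map_star_mul_self _).sub (hcp.isSelfAdjoint_map_star_mul_self _)
  exact (IsSelfAdjoint.smul_iff (IsSelfAdjoint.ofNat 4) (by norm_num)).1 h4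

section Order

variable {A B : Type*} [CStarAlgebra B] [PartialOrder B] [StarOrderedRing B]

lemma map_one_le_one [NormedRing A] [StarRing A] [CStarRing A] [NormedAlgebra ℂ A]
    {Φ : A →L[ℂ] B} (hcp : CompletelyPositive Φ) (hΦ : ‖Φ‖ ≤ 1) : Φ 1 ≤ 1 := by
  have hnorm : ‖Φ 1‖ ≤ 1 := by
    rcases subsingleton_or_nontrivial A with _ | _
    · simp [Subsingleton.elim (1 : A) 0]
    · simpa using Φ.le_of_opNorm_le hΦ 1
  have hsa : IsSelfAdjoint (Φ 1) := by
    simpa using hcp.isSelfAdjoint_map_star_mul_self 1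
  calc Φ 1 ≤ algebraMap ℝ B ‖Φ 1‖ := hsa.le_algebraMap_norm_self
    _ ≤ algebraMap ℝ B 1 := algebraMap_mono B hnorm
    _ = 1 := map_one _

/-- The Kadison–Schwarz inequality. -/
lemma star_map_mul_map_le [Semiring A] [StarRing A] {Φ : A → B} (hcp : CompletelyPositive Φ)
    (hΦ1 : Φ 1 ≤ 1) (a : A) : star (Φ a) * Φ a ≤ Φ (star a * a) := by
  obtain ⟨P, hP⟩ := hcp 2 (!![(1 : A), a; 0, 0]ᴴ * !![(1 : A), a; 0, 0]) ⟨_, rfl⟩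
  have h11 : Φ 1 = star (P 0 0) * P 0 0 + star (P 1 0) * P 1 0 := by
    simpa [Matrix.mul_apply, Fin.sum_univ_two] using congrFun (congrFun hP 0) 0
  have h12 : Φ a = star (P 0 0) * P 0 1 + star (P 1 0) * P 1 1 := by
    simpa [Matrix.mul_apply, Fin.sum_univ_two] using congrFun (congrFun hP 0) 1
  have h22 : Φ (star a * a) = star (P 0 1) * P 0 1 + star (P 1 1) * P 1 1 := by
    simpa [Matrix.mul_apply, Fin.sum_univ_two] using congrFun (congrFun hP 1) 1
  set b := Φ a
  -- Positivity of `Φ₂(Nᴴ N)` tested against the vector `(b, -1)`.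
  have hsq : star (P 0 0 * b - P 0 1) * (P 0 0 * b - P 0 1)
      + star (P 1 0 * b - P 1 1) * (P 1 0 * b - P 1 1)
      = star b * Φ 1 * b - star b * b + (Φ (star a * a) - star b * b) := by
    rw [h11, h22, h12]
    simp only [star_add, star_sub, star_mul, star_star]
    noncomm_ring
  have hnonneg : 0 ≤ star b * Φ 1 * b - star b * b + (Φ (star a * a) - star b * b) :=
    hsq ▸ add_nonneg (star_mul_self_nonneg _) (star_mul_self_nonneg _)
  have hconj : star b * Φ 1 * b - star b * b ≤ 0 := by
    simpa using star_left_conjugate_le_conjugate hΦ1 b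
  exact sub_nonneg.1 (by simpa using hnonneg.trans (add_le_add_left hconj _))

end Order

variable {A B : Type*} [Ring A] [StarRing A] [Algebra ℂ A] [StarModule ℂ A]
  [CStarAlgebra B] [PartialOrder B] [StarOrderedRing B] {Φ : A →ₗ[ℂ] B}

lemma map_star_mul_of_map_star_mul_self (hcp : CompletelyPositive Φ) (hΦ1 : Φ 1 ≤ 1) {a : A}
    (ha : Φ (star a * a) = star (Φ a) * Φ a) (b : A) : Φ (star a * b) = star (Φ a) * Φ b := by
  have hdefect_nonneg : ∀ x, 0 ≤ schwarzDefect Φ x x := fun x => by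
    simpa using hcp.star_map_mul_map_le hΦ1 x
  simpa [sub_eq_zero] using (schwarzDefect Φ).apply_eq_zero_of_apply_self_eq_zero
    hdefect_nonneg (by simpa [sub_eq_zero] using ha) b

lemma mem_multDomain_iff (hcp : CompletelyPositive Φ) (hΦ1 : Φ 1 ≤ 1) {a : A} :
    a ∈ multDomain Φ ↔ ∀ b, Φ (a * b) = Φ a * Φ b ∧ Φ (b * a) = Φ b * Φ a := by
  refine ⟨fun ha b => ⟨?_, ?_⟩, fun h => ⟨?_, ?_⟩⟩
  · have ha' : Φ (star (star a) * star a) = star (Φ (star a)) * Φ (star a) := by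
      simpa [hcp.map_star] using ha.2
    simpa [hcp.map_star] using hcp.map_star_mul_of_map_star_mul_self hΦ1 ha' b
  · calc Φ (b * a) = star (Φ (star a * star b)) := by
          rw [← hcp.map_star, star_mul, star_star, star_star]
      _ = Φ b * Φ a := by
          rw [hcp.map_star_mul_of_map_star_mul_self hΦ1 ha.1, hcp.map_star, star_mul, star_star,
            star_star]
  · rw [(h _).2, hcp.map_star]
  · rw [(h _).1, hcp.map_star]

lemma add_mem_multDomain (hcp : CompletelyPositive Φ) (hΦ1 : Φ 1 ≤ 1) {x y : A}
    (hx : x ∈ multDomain Φ) (hy : y ∈ multDomain Φ) : x + y ∈ multDomain Φ := by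
  rw [hcp.mem_multDomain_iff hΦ1] at hx hy ⊢
  intro b
  simp only [add_mul, mul_add, map_add, (hx b).1, (hx b).2, (hy b).1, (hy b).2, and_self]

lemma mul_mem_multDomain (hcp : CompletelyPositive Φ) (hΦ1 : Φ 1 ≤ 1) {x y : A}
    (hx : x ∈ multDomain Φ) (hy : y ∈ multDomain Φ) : x * y ∈ multDomain Φ := by
  rw [hcp.mem_multDomain_iff hΦ1] at hx hy ⊢
  intro b
  constructor
  · rw [mul_assoc, (hx _).1, (hy _).1, (hx _).1, mul_assoc]
  · rw [← mul_assoc, (hy _).2, (hx _).2, (hx _).1, mul_assoc]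

end CompletelyPositive

theorem multDomain_largest_subalgebra_general {A B : Type*}
    [NormedRing A] [StarRing A] [CStarRing A]
    [NormedAlgebra ℂ A] [StarModule ℂ A]
    [NormedRing B] [StarRing B] [CStarRing B] [CompleteSpace B]
    [NormedAlgebra ℂ B] [StarModule ℂ B]
    (Φ : A →L[ℂ] B) (hnorm : ‖Φ‖ ≤ 1) (hcp : CompletelyPositive (⇑Φ)) :
    IsClosed (multDomain (⇑Φ)) ∧
    (0 : A) ∈ multDomain (⇑Φ) ∧
    (∀ x ∈ multDomain (⇑Φ), ∀ y ∈ multDomain (⇑Φ), x + y ∈ multDomain (⇑Φ)) ∧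
    (∀ (c : ℂ), ∀ x ∈ multDomain (⇑Φ), c • x ∈ multDomain (⇑Φ)) ∧
    (∀ x ∈ multDomain (⇑Φ), ∀ y ∈ multDomain (⇑Φ), x * y ∈ multDomain (⇑Φ)) ∧
    (∀ x ∈ multDomain (⇑Φ), star x ∈ multDomain (⇑Φ)) ∧
    (∀ x ∈ multDomain (⇑Φ), ∀ y ∈ multDomain (⇑Φ), Φ (x * y) = Φ x * Φ y) ∧
    (∀ C : Set A, (∀ x ∈ C, star x ∈ C) → (∀ x ∈ C, ∀ y ∈ C, x * y ∈ C) →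
      (∀ x ∈ C, ∀ y ∈ C, Φ (x * y) = Φ x * Φ y) → C ⊆ multDomain (⇑Φ)) := by
  let _ : CStarAlgebra B := {}
  let _ : PartialOrder B := CStarAlgebra.spectralOrder B
  have _ : StarOrderedRing B := CStarAlgebra.spectralOrderedRing B
  have hΦ1 : Φ 1 ≤ 1 := hcp.map_one_le_one hnorm
  have hcp' : CompletelyPositive (Φ : A →ₗ[ℂ] B) := hcp
  refine ⟨isClosed_multDomain Φ.continuous, ⟨by simp, by simp⟩,
    fun x hx y hy => hcp'.add_mem_multDomain hΦ1 hx hy,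
    fun c x hx => smul_mem_multDomain (Φ := (Φ : A →ₗ[ℂ] B)) c hx,
    fun x hx y hy => hcp'.mul_mem_multDomain hΦ1 hx hy,
    fun x hx => star_mem_multDomain hcp'.map_star hx,
    fun x hx y _ => ((hcp'.mem_multDomain_iff hΦ1).1 hx y).1,
    fun C hC _ hmul => subset_multDomain hcp'.map_star hC hmul⟩

/-- **The multiplicative domain theorem (Choi).** For a contractive completely positive
linear map `Φ : A → B` between unital C*-algebras, the multiplicative domain `M_Φ` is a
norm-closed star-subalgebra of `A`, the restriction of `Φ` to `M_Φ` is multiplicative, and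
every star-subalgebra of `A` on which `Φ` is multiplicative is contained in `M_Φ`; thus
`M_Φ` is the largest C*-subalgebra of `A` on which `Φ` restricts to a *-homomorphism. -/
theorem multDomain_largest_subalgebra {A B : Type*}
    [NormedRing A] [StarRing A] [CStarRing A] [CompleteSpace A]
    [NormedAlgebra ℂ A] [StarModule ℂ A]
    [NormedRing B] [StarRing B] [CStarRing B] [CompleteSpace B]
    [NormedAlgebra ℂ B] [StarModule ℂ B]
    (Φ : A →L[ℂ] B) (hnorm : ‖Φ‖ ≤ 1) (hcp : CompletelyPositive (⇑Φ)) :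
    IsClosed (multDomain (⇑Φ)) ∧
    (0 : A) ∈ multDomain (⇑Φ) ∧
    (∀ x ∈ multDomain (⇑Φ), ∀ y ∈ multDomain (⇑Φ), x + y ∈ multDomain (⇑Φ)) ∧
    (∀ (c : ℂ), ∀ x ∈ multDomain (⇑Φ), c • x ∈ multDomain (⇑Φ)) ∧
    (∀ x ∈ multDomain (⇑Φ), ∀ y ∈ multDomain (⇑Φ), x * y ∈ multDomain (⇑Φ)) ∧
    (∀ x ∈ multDomain (⇑Φ), star x ∈ multDomain (⇑Φ)) ∧
    (∀ x ∈ multDomain (⇑Φ), ∀ y ∈ multDomain (⇑Φ), Φ (x * y) = Φ x * Φ y) ∧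
    (∀ C : Set A, (∀ x ∈ C, star x ∈ C) → (∀ x ∈ C, ∀ y ∈ C, x * y ∈ C) →
      (∀ x ∈ C, ∀ y ∈ C, Φ (x * y) = Φ x * Φ y) → C ⊆ multDomain (⇑Φ)) :=
  multDomain_largest_subalgebra_general Φ hnorm hcp
end

section
/- Let A be a unital C*-algebra, let Φ : A → A be a unital linear map, and let a ∈ A be such that the restriction of Φ to C*(1,a) is completely positive, i.e., for every n ∈ ℕ, applying Φ entrywise maps positive n×n matrices with all entries in C*(1,a) to positive n×n matrices over A. Then the following are equivalent: (i) Φ(a) = a, Φ(a*a) = a*a, and Φ(aa*) = aa*; (ii) Φ(a) = a, Φ(a*a) = Φ(a)*Φ(a), and Φ(aa*) = Φ(a)Φ(a)*; (iii) Φ(ba) = Φ(b)a and Φ(ab) = aΦ(b) for all b ∈ C*(1,a); (iv) Φ(b) = b for all b ∈ C*(1,a). -/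
open scoped Matrix

section PropagationAux

private lemma cfc_mem_elem' {A : Type*} [CStarAlgebra A] (x : A) [IsStarNormal x] (f : ℂ → ℂ) :
    cfc f x ∈ StarAlgebra.elemental ℂ x := by
  by_cases hf : ContinuousOn f (spectrum ℂ x)
  · rw [cfc_apply f x, cfcHom_eq_of_isStarNormal]
    exact ((continuousFunctionalCalculus x) _).2
  · rw [cfc_apply_of_not_continuousOn x hf]; exact zero_mem _

open ComplexOrder in
private lemma exists_sqrt_elem' {A : Type*} [CStarAlgebra A] [PartialOrder A] [StarOrderedRing A]
    {x : A} (hx : 0 ≤ x) : ∃ s ∈ StarAlgebra.elemental ℂ x, star s * s = x := by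
  have hsa : IsSelfAdjoint x := .of_nonneg hx
  have hnormal : IsStarNormal x := hsa.isStarNormal
  set f : ℂ → ℂ := fun z => (Real.sqrt z.re : ℂ) with hf
  have hfc : Continuous f := by fun_prop
  refine ⟨cfc f x, cfc_mem_elem' x f, ?_⟩
  have hstar : star (cfc f x) = cfc f x := by
    rw [← cfc_star]
    congr 1
    funext z
    simp [hf, Complex.star_def, Complex.conj_ofReal]
  rw [hstar, ← cfc_mul f f x hfc.continuousOn hfc.continuousOn]
  have h1 : ∀ z ∈ spectrum ℂ x, f z * f z = z := by
    intro z hz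
    have hz0 : 0 ≤ z := spectrum_nonneg_of_nonneg hx hz
    rw [Complex.le_def] at hz0
    simp only [Complex.zero_re, Complex.zero_im] at hz0
    have : z = (z.re : ℂ) := by
      apply Complex.ext <;> simp [hz0.2.symm]
    rw [hf]
    simp only
    rw [← Complex.ofReal_mul, Real.mul_self_sqrt hz0.1, ← this]
  rw [cfc_congr h1, cfc_id' ℂ x]

variable {A : Type*} [CStarAlgebra A] [PartialOrder A] [StarOrderedRing A]
  (Φ : A →ₗ[ℂ] A) (a : A)
  (hcp : ∀ n : ℕ, ∀ N : Matrix (Fin n) (Fin n) A,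
      (∀ i j, N i j ∈ StarAlgebra.elemental ℂ a) →
      ∃ P : Matrix (Fin n) (Fin n) A, (Nᴴ * N).map (⇑Φ) = Pᴴ * P)

include hcp in
private lemma mapMat' {n : ℕ} [NeZero n] (v : Fin n → A)
    (hv : ∀ i, v i ∈ StarAlgebra.elemental ℂ a) :
    ∃ P : Matrix (Fin n) (Fin n) A,
      (Matrix.of fun i j => Φ (star (v i) * v j)) = Pᴴ * P := by
  set N : Matrix (Fin n) (Fin n) A := Matrix.of fun k i => if k = 0 then v i else 0 with hN
  obtain ⟨P, hP⟩ := hcp n N (by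
    intro i j
    simp only [hN, Matrix.of_apply]
    split
    · exact hv j
    · exact zero_mem _)
  refine ⟨P, ?_⟩
  rw [← hP]
  ext i j
  simp only [Matrix.map_apply, Matrix.mul_apply, Matrix.conjTranspose_apply, hN, Matrix.of_apply]
  congr 1
  rw [Finset.sum_eq_single (0 : Fin n)]
  · simp
  · intro k _ hk; simp [hk]
  · simp

include hcp in
private lemma quad' {n : ℕ} [NeZero n] (v u : Fin n → A)
    (hv : ∀ i, v i ∈ StarAlgebra.elemental ℂ a) :
    0 ≤ ∑ i, ∑ j, star (u i) * Φ (star (v i) * v j) * u j := by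
  obtain ⟨P, hP⟩ := mapMat' Φ a hcp v hv
  have hentry : ∀ i j, Φ (star (v i) * v j) = (Pᴴ * P) i j := fun i j =>
    congrFun (congrFun hP i) j
  calc (0:A) ≤ ∑ k, star (∑ j, P k j * u j) * (∑ j, P k j * u j) :=
        Finset.sum_nonneg fun k _ => star_mul_self_nonneg _
    _ = ∑ k, ∑ i, ∑ j, star (u i) * (star (P k i) * P k j) * u j := by
        refine Finset.sum_congr rfl fun k _ => ?_
        rw [star_sum, Finset.sum_mul]
        refine Finset.sum_congr rfl fun i _ => ?_
        rw [Finset.mul_sum]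
        refine Finset.sum_congr rfl fun j _ => ?_
        rw [star_mul]
        noncomm_ring
    _ = ∑ i, ∑ j, star (u i) * Φ (star (v i) * v j) * u j := by
        rw [Finset.sum_comm]
        refine Finset.sum_congr rfl fun i _ => ?_
        rw [Finset.sum_comm]
        refine Finset.sum_congr rfl fun j _ => ?_
        rw [hentry, Matrix.mul_apply, Finset.mul_sum, Finset.sum_mul]
        exact Finset.sum_congr rfl fun k _ => by simp [Matrix.conjTranspose_apply]

include hcp in
private lemma herm' {b : A} (hb : b ∈ StarAlgebra.elemental ℂ a) : Φ (star b) = star (Φ b) := by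
  obtain ⟨P, hP⟩ := mapMat' Φ a hcp ![1, b] (by
    intro i; fin_cases i
    · exact one_mem _
    · exact hb)
  have hsa : (Pᴴ * P)ᴴ = Pᴴ * P := by
    rw [Matrix.conjTranspose_mul, Matrix.conjTranspose_conjTranspose]
  rw [← hP] at hsa
  have := congrFun (congrFun hsa 1) 0
  simpa [Matrix.conjTranspose_apply] using this.symm

include hcp in
private lemma pos' {p : A} (hp : p ∈ StarAlgebra.elemental ℂ a) (hp0 : 0 ≤ p) : 0 ≤ Φ p := by
  obtain ⟨s, hs_mem, hss⟩ := exists_sqrt_elem' hp0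
  have hs : s ∈ StarAlgebra.elemental ℂ a :=
    StarAlgebra.elemental.le_of_mem (StarAlgebra.elemental.isClosed ℂ a) hp hs_mem
  have := quad' Φ a hcp ![s] ![1] (fun i => by fin_cases i; exact hs)
  simpa [Fin.sum_univ_one, hss] using this

include hcp in
private lemma schwarz' (hunital : Φ 1 = 1) {b : A} (hb : b ∈ StarAlgebra.elemental ℂ a) :
    star (Φ b) * Φ b ≤ Φ (star b * b) := by
  have := quad' Φ a hcp ![1, b] ![-(Φ b), 1] (fun i => by
    fin_cases i
    · exact one_mem _
    · exact hb)
  rw [← sub_nonneg]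
  simp only [Fin.sum_univ_two, Matrix.cons_val_zero, Matrix.cons_val_one, Matrix.head_cons,
    star_one, one_mul, mul_one, hunital, star_neg] at this
  rw [herm' Φ a hcp hb] at this
  convert this using 1
  noncomm_ring

private lemma phi_algebraMap' (hunital : Φ 1 = 1) (r : ℝ) :
    Φ (algebraMap ℝ A r) = algebraMap ℝ A r := by
  rw [IsScalarTower.algebraMap_apply ℝ ℂ A, Algebra.algebraMap_eq_smul_one, map_smul, hunital]

include hcp in
private lemma normBound' (hunital : Φ 1 = 1) {b : A} (hb : b ∈ StarAlgebra.elemental ℂ a) :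
    ‖Φ b‖ ≤ ‖b‖ := by
  have hmem : star b * b ∈ StarAlgebra.elemental ℂ a := mul_mem (star_mem hb) hb
  have h1 : 0 ≤ Φ (star b * b) := pos' Φ a hcp hmem (star_mul_self_nonneg b)
  have h2 : Φ (star b * b) ≤ algebraMap ℝ A (‖b‖ ^ 2) := by
    have hq : 0 ≤ algebraMap ℝ A (‖b‖ ^ 2) - star b * b :=
      sub_nonneg.2 CStarAlgebra.star_mul_le_algebraMap_norm_sq
    have hqmem : algebraMap ℝ A (‖b‖ ^ 2) - star b * b ∈ StarAlgebra.elemental ℂ a := by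
      refine sub_mem ?_ hmem
      rw [IsScalarTower.algebraMap_apply ℝ ℂ A]
      exact algebraMap_mem _ _
    have := pos' Φ a hcp hqmem hq
    rw [map_sub, phi_algebraMap' Φ hunital] at this
    exact sub_nonneg.mp this
  have h3 : ‖Φ (star b * b)‖ ≤ ‖b‖ ^ 2 :=
    (CStarAlgebra.norm_le_iff_le_algebraMap _ (by positivity) h1).2 h2
  have h4 : ‖star (Φ b) * Φ b‖ ≤ ‖Φ (star b * b)‖ :=
    CStarAlgebra.norm_le_norm_of_nonneg_of_le (star_mul_self_nonneg _)
      (schwarz' Φ a hcp hunital hb)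
  rw [CStarRing.norm_star_mul_self] at h4
  nlinarith [norm_nonneg (Φ b), norm_nonneg b]

include hcp in
private lemma multDomain' (hunital : Φ 1 = 1) {x : A} (hx : x ∈ StarAlgebra.elemental ℂ a)
    (hxx : Φ (star x * x) = star (Φ x) * Φ x)
    {b : A} (hb : b ∈ StarAlgebra.elemental ℂ a) :
    Φ (star x * b) = star (Φ x) * Φ b := by
  set y := Φ x with hy
  set q := Φ b with hq
  set m := Φ (star x * b) with hm
  set c := m - star y * q with hc
  set K := Φ (star b * b) with hK
  set e := star c * c with he
  have h21 : Φ (star b * x) = star m := by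
    have := herm' Φ a hcp (mul_mem (star_mem hx) hb)
    rwa [star_mul, star_star] at this
  have hx1 : Φ (star x) = star y := herm' Φ a hcp hx
  have hb1 : Φ (star b) = star q := herm' Φ a hcp hb
  have key : ∀ d : A, 0 ≤ K - (star d * e + e * d) := by
    intro d
    have H := quad' Φ a hcp ![1, x, b] ![y * c * d, -(c * d), 1] (fun i => by
      fin_cases i
      · exact one_mem _
      · exact hx
      · exact hb)
    simp only [Fin.sum_univ_three, Matrix.cons_val_zero, Matrix.cons_val_one, Matrix.head_cons,
      Matrix.cons_val_two, Matrix.tail_cons, star_one, one_mul, mul_one, hunital] at H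
    rw [hx1, hb1, h21, hxx, ← hy, ← hm, ← hq, ← hK] at H
    convert H using 1
    simp only [he, hc, star_mul, star_sub, star_star, star_neg]
    noncomm_ring
  have he0 : 0 ≤ e := star_mul_self_nonneg c
  have hnorm : ∀ n : ℕ, (n : ℝ) * ‖e‖ ≤ ‖K‖ := by
    intro n
    have hd := key ((n : ℂ) • 1)
    have hsd : star ((n : ℂ) • (1:A)) = (n : ℂ) • (1:A) := by
      simp
    rw [hsd] at hd
    have heq : (n : ℂ) • (1:A) * e + e * ((n : ℂ) • (1:A)) = (2 * n : ℕ) • e := by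
      rw [smul_mul_assoc, mul_smul_comm, one_mul, mul_one, ← Nat.cast_smul_eq_nsmul ℂ]
      push_cast
      rw [← add_smul]
      ring_nf
    rw [heq] at hd
    have h1 : (2 * n : ℕ) • e ≤ K := sub_nonneg.mp hd
    have h2 : (0:A) ≤ (2 * n : ℕ) • e := nsmul_nonneg he0 _
    have := CStarAlgebra.norm_le_norm_of_nonneg_of_le h2 h1
    rw [← Nat.cast_smul_eq_nsmul ℝ, norm_smul] at this
    simp only [Real.norm_natCast] at this
    push_cast at this ⊢
    nlinarith [norm_nonneg e]
  have he' : ‖e‖ = 0 := by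
    by_contra h
    have hpos : 0 < ‖e‖ := lt_of_le_of_ne (norm_nonneg e) (Ne.symm h)
    obtain ⟨n, hn⟩ := exists_nat_gt (‖K‖ / ‖e‖)
    have := hnorm n
    rw [div_lt_iff₀ hpos] at hn
    linarith
  have hce : c = 0 := by
    have he2 : e = 0 := norm_eq_zero.mp he'
    rw [he] at he2
    exact (CStarRing.star_mul_self_eq_zero_iff c).mp he2
  have h0 : m - star y * q = 0 := by rw [← hc]; exact hce
  exact sub_eq_zero.mp h0

include hcp in
private lemma fixAll' (hunital : Φ 1 = 1)
    (h3 : ∀ b ∈ StarAlgebra.elemental ℂ a, Φ (b * a) = Φ b * a ∧ Φ (a * b) = a * Φ b) :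
    ∀ b ∈ StarAlgebra.elemental ℂ a, Φ b = b := by
  have key : ∀ u, ∀ hu : u ∈ StarAlgebra.elemental ℂ a,
      ∀ y ∈ StarAlgebra.elemental ℂ a, Φ (u * y) = u * Φ y := by
    intro u hu
    induction hu using StarAlgebra.elemental.induction_on with
    | self => exact fun y hy => (h3 y hy).2
    | star_self =>
      intro y hy
      have h1 : Φ (star (star y * a)) = star (Φ (star y * a)) :=
        herm' Φ a hcp (mul_mem (star_mem hy) (StarAlgebra.elemental.self_mem ℂ a))
      rw [star_mul, star_star] at h1
      rw [h1, (h3 (star y) (star_mem hy)).1, star_mul, herm' Φ a hcp hy, star_star]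
    | algebraMap r =>
      intro y hy
      rw [← Algebra.smul_def, map_smul, Algebra.smul_def]
    | add u hu v hv pu pv =>
      intro y hy
      rw [add_mul, map_add, pu _ hy, pv _ hy, add_mul]
    | mul u hu v hv pu pv =>
      intro y hy
      rw [mul_assoc, pu _ (mul_mem hv hy), pv _ hy, mul_assoc]
    | closure s hs hps v hv =>
      intro y hy
      have hvmem : v ∈ StarAlgebra.elemental ℂ a :=
        closure_minimal hs (StarAlgebra.elemental.isClosed ℂ a) hv
      set C : ℝ := ‖y‖ + ‖Φ y‖ + 1 with hC
      have hC1 : (1:ℝ) ≤ C := by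
        have := norm_nonneg y; have := norm_nonneg (Φ y); rw [hC]; linarith
      have hsmall : ∀ ε : ℝ, 0 < ε → ‖Φ (v * y) - v * Φ y‖ ≤ ε * C := by
        intro ε hε
        obtain ⟨u, hus, hdist⟩ := Metric.mem_closure_iff.mp hv ε hε
        have humem : u ∈ StarAlgebra.elemental ℂ a := hs hus
        have hu_eq : Φ (u * y) = u * Φ y := hps u hus y hy
        have hsplit : Φ (v * y) - v * Φ y = Φ ((v - u) * y) + (u - v) * Φ y := by
          rw [sub_mul, map_sub, hu_eq, sub_mul]
          abel
        have hd : ‖v - u‖ ≤ ε := le_of_lt (by rwa [dist_eq_norm] at hdist)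
        have hd' : ‖u - v‖ ≤ ε := by rwa [norm_sub_rev] at hd
        rw [hsplit]
        calc ‖Φ ((v - u) * y) + (u - v) * Φ y‖
            ≤ ‖Φ ((v - u) * y)‖ + ‖(u - v) * Φ y‖ := norm_add_le _ _
          _ ≤ ‖(v - u) * y‖ + ‖u - v‖ * ‖Φ y‖ := by
              gcongr
              · exact normBound' Φ a hcp hunital (mul_mem (sub_mem hvmem humem) hy)
              · exact norm_mul_le _ _
          _ ≤ ‖v - u‖ * ‖y‖ + ‖u - v‖ * ‖Φ y‖ := by
              gcongr
              exact norm_mul_le _ _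
          _ ≤ ε * C := by
              rw [hC]
              nlinarith [norm_nonneg y, norm_nonneg (Φ y)]
      have hzero : ‖Φ (v * y) - v * Φ y‖ ≤ 0 := by
        refine le_of_forall_pos_le_add fun ε hε => ?_
        have := hsmall (ε / C) (div_pos hε (by linarith))
        rw [div_mul_eq_mul_div, mul_div_assoc] at this
        rw [zero_add]
        calc ‖Φ (v * y) - v * Φ y‖ ≤ ε * (C / C) := this
          _ = ε := by rw [div_self (by linarith), mul_one]
      have := le_antisymm hzero (norm_nonneg _)
      rw [norm_eq_zero, sub_eq_zero] at this
      exact this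
  intro b hb
  have := key b hb 1 (one_mem _)
  rwa [mul_one, hunital, mul_one] at this

include hcp in
private theorem aux_tfae (hunital : Φ 1 = 1) :
    List.TFAE
      [Φ a = a ∧ Φ (star a * a) = star a * a ∧ Φ (a * star a) = a * star a,
       Φ a = a ∧ Φ (star a * a) = star (Φ a) * Φ a ∧ Φ (a * star a) = Φ a * star (Φ a),
       ∀ b ∈ StarAlgebra.elemental ℂ a, Φ (b * a) = Φ b * a ∧ Φ (a * b) = a * Φ b,
       ∀ b ∈ StarAlgebra.elemental ℂ a, Φ b = b] := by
  have hmema : a ∈ StarAlgebra.elemental ℂ a := StarAlgebra.elemental.self_mem ℂ a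
  tfae_have 1 → 2 := by
    rintro ⟨h1, h2, h3⟩
    exact ⟨h1, by rw [h1]; exact h2, by rw [h1]; exact h3⟩
  tfae_have 2 → 3 := by
    rintro ⟨h1, h2, h3⟩ b hb
    have hstar_a : Φ (star a) = star (Φ a) := herm' Φ a hcp hmema
    constructor
    · -- Φ (b * a) = Φ b * a
      have e1 : Φ (star a * star b) = star (Φ a) * Φ (star b) :=
        multDomain' Φ a hcp hunital hmema h2 (star_mem hb)
      have e2 : Φ (star (b * a)) = star (Φ (b * a)) :=
        herm' Φ a hcp (mul_mem hb hmema)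
      rw [star_mul] at e2
      have e3 : star (Φ (b * a)) = star (Φ a) * star (Φ b) := by
        rw [← e2, e1, herm' Φ a hcp hb]
      have := congrArg star e3
      rw [star_star, star_mul, star_star, star_star] at this
      rw [this, h1]
    · -- Φ (a * b) = a * Φ b
      have hxx' : Φ (star (star a) * star a) = star (Φ (star a)) * Φ (star a) := by
        rw [star_star, h3, hstar_a, star_star]
      have := multDomain' Φ a hcp hunital (star_mem hmema) hxx' hb
      rw [star_star, hstar_a, star_star] at this
      rw [this, h1]
  tfae_have 3 → 4 := fun h3 => fixAll' Φ a hcp hunital h3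
  tfae_have 4 → 1 := by
    intro h4
    exact ⟨h4 a hmema, h4 _ (mul_mem (star_mem hmema) hmema),
      h4 _ (mul_mem hmema (star_mem hmema))⟩
  tfae_finish

end PropagationAux

/-- **Propagation of fixed points (Theorem 2.3).** Let `A` be a unital C*-algebra,
`Φ : A → A` a unital linear map, and `a ∈ A` such that the restriction of `Φ` to
`C*(1,a)` is completely positive (applying `Φ` entrywise maps positive `n × n`
matrices with entries in `C*(1,a)` to positive matrices over `A`). Then the following
are equivalent:
(i) `Φ(a) = a`, `Φ(a*a) = a*a` and `Φ(aa*) = aa*`;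
(ii) `Φ(a) = a`, `Φ(a*a) = Φ(a)*Φ(a)` and `Φ(aa*) = Φ(a)Φ(a)*`;
(iii) `Φ(ba) = Φ(b)a` and `Φ(ab) = aΦ(b)` for all `b ∈ C*(1,a)`;
(iv) `Φ(b) = b` for all `b ∈ C*(1,a)`. -/
theorem propagation_of_fixed_points {A : Type*}
    [NormedRing A] [StarRing A] [CStarRing A] [CompleteSpace A]
    [NormedAlgebra ℂ A] [StarModule ℂ A]
    (Φ : A →ₗ[ℂ] A) (hunital : Φ 1 = 1) (a : A)
    (hcp : ∀ n : ℕ, ∀ N : Matrix (Fin n) (Fin n) A,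
      (∀ i j, N i j ∈ StarAlgebra.elemental ℂ a) →
      ∃ P : Matrix (Fin n) (Fin n) A, (Nᴴ * N).map (⇑Φ) = Pᴴ * P) :
    List.TFAE
      [Φ a = a ∧ Φ (star a * a) = star a * a ∧ Φ (a * star a) = a * star a,
       Φ a = a ∧ Φ (star a * a) = star (Φ a) * Φ a ∧ Φ (a * star a) = Φ a * star (Φ a),
       ∀ b ∈ StarAlgebra.elemental ℂ a, Φ (b * a) = Φ b * a ∧ Φ (a * b) = a * Φ b,
       ∀ b ∈ StarAlgebra.elemental ℂ a, Φ b = b] := by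
  letI : CStarAlgebra A := CStarAlgebra.mk
  letI := CStarAlgebra.spectralOrder A
  letI := CStarAlgebra.spectralOrderedRing A
  exact aux_tfae Φ a hcp hunital
end

section
/- Let A be a unital C*-algebra, let Φ : A → A be a unital completely positive linear map, and let a ∈ A. Then the following are equivalent: (i) Φ(a) = a, Φ(a*a) = a*a, and Φ(aa*) = aa*; (ii) Φ(a) = a and, for all x ∈ A, Φ(ax) = aΦ(x) and Φ(xa) = Φ(x)a; (iii) Φ(b) = b for all b ∈ C*(1,a). -/
open scoped Matrix

/-!
Complete positivity turns the Gram matrix `[Φ (vᵢ⋆ vⱼ)]` of any tuple `v` into a matrix `P⋆P`.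
For `v = (x⋆, a, 1)` and `c = (0, 1, -a)`, hypothesis (i) makes `c⋆ (P⋆P) c` vanish, which in a
C⋆-algebra forces `P c = 0`; the first entry of `(P⋆P) c = 0` is `Φ (x a) = Φ x * a`, and the same
argument for `a⋆` gives (ii). Conversely, the elements `b` with `Φ (b x) = b Φ x` and
`Φ (x b) = Φ x b` for all `x` form a star subalgebra (Φ commutes with `⋆`), which is closed since
positive maps are bounded, and is fixed pointwise since `Φ 1 = 1`; so it contains `C⋆(1, a)`.
-/

namespace CStarRing

variable {B : Type*} [NonUnitalNormedRing B] [StarRing B] [CStarRing B] [PartialOrder B]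
  [StarOrderedRing B] {m n : Type*} [Fintype m] [Fintype n]

theorem dotProduct_star_self_eq_zero {v : n → B} : star v ⬝ᵥ v = 0 ↔ v = 0 := by
  refine ⟨fun h => ?_, fun h => by simp [h]⟩
  ext k
  rw [Pi.zero_apply, ← star_mul_self_eq_zero_iff]
  exact congr_fun ((Fintype.sum_eq_zero_iff_of_nonneg fun i => star_mul_self_nonneg (v i)).mp h) k

theorem conjTranspose_mul_self_mulVec_eq_zero {P : Matrix m n B} {c : n → B}
    (h : star c ⬝ᵥ (Pᴴ * P) *ᵥ c = 0) : (Pᴴ * P) *ᵥ c = 0 := by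
  rw [← Matrix.mulVec_mulVec, Matrix.dotProduct_mulVec, ← Matrix.star_mulVec,
    dotProduct_star_self_eq_zero] at h
  rw [← Matrix.mulVec_mulVec, h, Matrix.mulVec_zero]

end CStarRing

namespace CompletelyPositive

variable {A B : Type*}

theorem exists_map_star_mul_eq_conjTranspose_mul [NonUnitalNonAssocSemiring A] [StarRing A]
    [NonUnitalNonAssocSemiring B] [StarRing B] {Φ : A → B} (hΦ : CompletelyPositive Φ)
    {n : ℕ} (v : Fin n → A) :
    ∃ P : Matrix (Fin n) (Fin n) B, Matrix.of (fun i j => Φ (star (v i) * v j)) = Pᴴ * P := by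
  let N : Matrix (Fin n) (Fin n) A := Matrix.of fun i j => if (i : ℕ) = 0 then v j else 0
  have hN : Nᴴ * N = Matrix.of fun i j => star (v i) * v j := by
    ext i j
    cases n with
    | zero => exact i.elim0
    | succ n => simp [N, Matrix.mul_apply]
  obtain ⟨P, hP⟩ := hΦ n (Nᴴ * N) ⟨N, rfl⟩
  exact ⟨P, by rw [← hP, hN]; rfl⟩

theorem map_star_s5 [Semiring A] [StarRing A] [NonUnitalNonAssocSemiring B] [StarRing B]
    {Φ : A → B} (hΦ : CompletelyPositive Φ) (x : A) : Φ (star x) = star (Φ x) := by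
  obtain ⟨P, hP⟩ := hΦ.exists_map_star_mul_eq_conjTranspose_mul ![x, 1]
  have h := congr_fun₂ (congrArg Matrix.conjTranspose hP) 0 1
  rw [Matrix.conjTranspose_mul, Matrix.conjTranspose_conjTranspose, ← hP] at h
  simpa using h.symm

theorem map_star_mul_self_nonneg [NonUnitalNonAssocSemiring A] [StarRing A] [NonUnitalSemiring B]
    [PartialOrder B] [StarRing B] [StarOrderedRing B] {Φ : A → B} (hΦ : CompletelyPositive Φ)
    (w : A) : 0 ≤ Φ (star w * w) := by
  obtain ⟨P, hP⟩ := hΦ.exists_map_star_mul_eq_conjTranspose_mul ![w]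
  have h := congr_fun₂ hP 0 0
  simp only [Matrix.of_apply, Matrix.cons_val_fin_one, Matrix.mul_apply,
    Matrix.conjTranspose_apply] at h
  exact h ▸ Finset.sum_nonneg fun k _ => star_mul_self_nonneg (P k 0)

theorem map_nonneg [CStarAlgebra A] [PartialOrder A] [StarOrderedRing A] [NonUnitalSemiring B]
    [PartialOrder B] [StarRing B] [StarOrderedRing B] {Φ : A → B} (hΦ : CompletelyPositive Φ)
    {x : A} (hx : 0 ≤ x) : 0 ≤ Φ x := by
  obtain ⟨w, rfl⟩ := CStarAlgebra.nonneg_iff_eq_star_mul_self.mp hx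
  exact hΦ.map_star_mul_self_nonneg w

theorem continuous [CStarAlgebra A] [PartialOrder A] [StarOrderedRing A] [CStarAlgebra B]
    [PartialOrder B] [StarOrderedRing B] {Φ : A →ₗ[ℂ] B} (hΦ : CompletelyPositive Φ) :
    Continuous Φ :=
  map_continuous (PositiveLinearMap.mk₀ Φ fun _ => hΦ.map_nonneg)

section MultiplicativeDomain

variable [Ring A] [StarRing A] [NormedRing B] [StarRing B] [CStarRing B]
  [PartialOrder B] [StarOrderedRing B] {Φ : A → B}

theorem map_mul_of_map_star_mul_self (hΦ : CompletelyPositive Φ) (h1 : Φ 1 = 1) {a : A} {b : B}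
    (ha : Φ a = b) (haa : Φ (star a * a) = star b * b) (x : A) : Φ (x * a) = Φ x * b := by
  obtain ⟨P, hP⟩ := hΦ.exists_map_star_mul_eq_conjTranspose_mul ![star x, a, 1]
  have hsa : Φ (star a) = star b := by rw [hΦ.map_star_s5, ha]
  let c : Fin 3 → B := ![0, 1, -b]
  have hc : (Pᴴ * P) *ᵥ c = 0 := by
    refine CStarRing.conjTranspose_mul_self_mulVec_eq_zero ?_
    rw [← hP]
    simp [c, Matrix.mulVec, dotProduct, Fin.sum_univ_three, ha, hsa, haa, h1]
  simpa [c, ← hP, Matrix.mulVec, dotProduct, Fin.sum_univ_three, add_neg_eq_zero] using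
    congr_fun hc 0

theorem map_mul_of_map_mul_star_self (hΦ : CompletelyPositive Φ) (h1 : Φ 1 = 1) {a : A} {b : B}
    (ha : Φ a = b) (haa : Φ (a * star a) = b * star b) (x : A) : Φ (a * x) = b * Φ x := by
  have h := hΦ.map_mul_of_map_star_mul_self h1 (a := star a) (b := star b)
    (by rw [hΦ.map_star_s5, ha]) (by simpa using haa) (star x)
  rw [← star_mul, hΦ.map_star_s5, hΦ.map_star_s5, ← star_mul, star_inj] at h
  exact h

end MultiplicativeDomain

end CompletelyPositive

namespace LinearMap

variable {R A : Type*} [CommSemiring R] [StarRing R] [Semiring A] [StarRing A] [Algebra R A]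
  [StarModule R A]

def bimoduleDomain (Φ : A →ₗ[R] A) (hΦ : ∀ x, Φ (star x) = star (Φ x)) : StarSubalgebra R A where
  carrier := {b | ∀ x, Φ (b * x) = b * Φ x ∧ Φ (x * b) = Φ x * b}
  mul_mem' {b c} hb hc x := by
    refine ⟨?_, ?_⟩
    · rw [mul_assoc, (hb _).1, (hc _).1, mul_assoc]
    · rw [← mul_assoc, (hc _).2, (hb _).2, mul_assoc]
  add_mem' {b c} hb hc x := by
    refine ⟨?_, ?_⟩
    · rw [add_mul, map_add, (hb _).1, (hc _).1, add_mul]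
    · rw [mul_add, map_add, (hb _).2, (hc _).2, mul_add]
  algebraMap_mem' r x := by
    refine ⟨?_, ?_⟩
    · rw [← Algebra.smul_def, ← Algebra.smul_def, map_smul]
    · rw [← Algebra.commutes, ← Algebra.commutes, ← Algebra.smul_def, ← Algebra.smul_def,
        map_smul]
  star_mem' {b} hb x := by
    refine ⟨?_, ?_⟩
    · rw [← star_star x, ← star_mul, hΦ, (hb _).2, star_mul, ← hΦ]
    · rw [← star_star x, ← star_mul, hΦ, (hb _).1, star_mul, ← hΦ]

variable {Φ : A →ₗ[R] A} {hΦ : ∀ x, Φ (star x) = star (Φ x)}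

theorem map_eq_self_of_mem_bimoduleDomain (h1 : Φ 1 = 1) {b : A} (hb : b ∈ bimoduleDomain Φ hΦ) :
    Φ b = b := by
  simpa [h1] using (hb 1).2

theorem isClosed_bimoduleDomain [TopologicalSpace A] [T2Space A] [ContinuousMul A]
    (hc : Continuous Φ) : IsClosed (bimoduleDomain Φ hΦ : Set A) := by
  have : (bimoduleDomain Φ hΦ : Set A) =
      ⋂ x, ({b | Φ (b * x) = b * Φ x} ∩ {b | Φ (x * b) = Φ x * b}) := by
    ext; simp [bimoduleDomain, forall_and]
  rw [this]
  exact isClosed_iInter fun x =>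
    (isClosed_eq (by fun_prop) (by fun_prop)).inter (isClosed_eq (by fun_prop) (by fun_prop))

end LinearMap

/-- **Theorem 2.6.** Let `A` be a unital C*-algebra, `Φ : A → A` a unital completely
positive linear map, and `a ∈ A`. The following are equivalent:
(i) `Φ(a) = a`, `Φ(a*a) = a*a` and `Φ(aa*) = aa*`;
(ii) `Φ(a) = a` and, for all `x ∈ A`, `Φ(ax) = aΦ(x)` and `Φ(xa) = Φ(x)a`;
(iii) `Φ(b) = b` for all `b ∈ C*(1,a)`. -/
theorem propagation_of_fixed_points_cp {A : Type*}
    [NormedRing A] [StarRing A] [CStarRing A] [CompleteSpace A]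
    [NormedAlgebra ℂ A] [StarModule ℂ A]
    (Φ : A →ₗ[ℂ] A) (hunital : Φ 1 = 1) (hcp : CompletelyPositive (⇑Φ)) (a : A) :
    List.TFAE
      [Φ a = a ∧ Φ (star a * a) = star a * a ∧ Φ (a * star a) = a * star a,
       Φ a = a ∧ ∀ x : A, Φ (a * x) = a * Φ x ∧ Φ (x * a) = Φ x * a,
       ∀ b ∈ StarAlgebra.elemental ℂ a, Φ b = b] := by
  let : CStarAlgebra A := {}
  let := CStarAlgebra.spectralOrder A
  have := CStarAlgebra.spectralOrderedRing A
  tfae_have 1 → 2 := fun ⟨ha, haa, haa'⟩ => ⟨ha, fun x =>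
    ⟨hcp.map_mul_of_map_mul_star_self hunital ha haa' x,
      hcp.map_mul_of_map_star_mul_self hunital ha haa x⟩⟩
  tfae_have 2 → 3 := fun ⟨_, hmul⟩ b hb =>
    LinearMap.map_eq_self_of_mem_bimoduleDomain (hΦ := hcp.map_star_s5) hunital <|
      StarAlgebra.elemental.le_of_mem
        (LinearMap.isClosed_bimoduleDomain hcp.continuous) hmul hb
  tfae_have 3 → 1 := fun h =>
    have ha := StarAlgebra.elemental.self_mem ℂ a
    ⟨h a ha, h _ (mul_mem (star_mem ha) ha), h _ (mul_mem ha (star_mem ha))⟩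
  tfae_finish
end

section
/- Let H be a complex Hilbert space with a Hilbert basis (b_i)_{i ∈ ι}, let E ∈ B(H) be an orthogonal projection (E = E* and E ∘ E = E), and let C ∈ B(H) be a positive operator. Assume that the families (⟪C b_i, b_i⟫)_{i ∈ ι} and (⟪(E ∘ C ∘ E) b_i, b_i⟫)_{i ∈ ι} are summable (i.e., C and ECE have finite trace) and that ∑'_i ⟪C b_i, b_i⟫ = ∑'_i ⟪(E ∘ C ∘ E) b_i, b_i⟫ (equality of traces). Then C ∘ E = E ∘ C = C. -/
/-!
Write `C = S† S`. For any operator `T` the sums `∑ ‖T bᵢ‖²` and `∑ ‖T† bⱼ‖²` agree, both being the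
double sum `∑ᵢ ∑ⱼ |⟪bⱼ, T bᵢ⟫|²`; taking these sums in `ℝ≥0∞` makes the interchange free of
summability conditions. Hence `tr C = ∑ ‖S† bⱼ‖²` and `tr (E C E) = ∑ ‖(S E)† bⱼ‖² = ∑ ‖E S† bⱼ‖²`,
so by Pythagoras `tr C = tr (E C E) + ∑ ‖S† bⱼ - E S† bⱼ‖²`. Equality of the finite traces kills
the last sum, so `E S† = S†`, i.e. `E C = C`, and `C E = C` is its adjoint.
-/

open scoped InnerProductSpace InnerProduct ENNReal

open ContinuousLinearMap

section

variable {ι κ 𝕜 E F : Type*} [RCLike 𝕜]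
  [NormedAddCommGroup E] [InnerProductSpace 𝕜 E] [NormedAddCommGroup F] [InnerProductSpace 𝕜 F]

theorem IsStarProjection.enorm_sq_eq_enorm_apply_sq_add [CompleteSpace E] {P : E →L[𝕜] E}
    (hP : IsStarProjection P) (x : E) :
    ‖x‖ₑ ^ 2 = ‖P x‖ₑ ^ 2 + ‖x - P x‖ₑ ^ 2 := by
  have horth : ⟪P x, x - P x⟫_𝕜 = 0 := by
    rw [inner_sub_right, ← P.adjoint_inner_left, hP.isSelfAdjoint.adjoint_eq]
    change _ - ⟪(P * P) x, x⟫_𝕜 = 0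
    rw [hP.isIdempotentElem.eq, sub_self]
  have h := norm_add_sq_eq_norm_sq_add_norm_sq_of_inner_eq_zero _ _ horth
  rw [add_sub_cancel] at h
  simp only [← ofReal_norm, ← ENNReal.ofReal_pow (norm_nonneg _)]
  rw [← ENNReal.ofReal_add (by positivity) (by positivity), sq, sq, sq, h]

theorem inner_adjoint_comp_self_apply_self [CompleteSpace E] [CompleteSpace F]
    (T : E →L[𝕜] F) (x : E) :
    ⟪(T† ∘L T) x, x⟫_𝕜 = ((‖T x‖ₑ ^ 2).toReal : 𝕜) := by
  rw [comp_apply, T.adjoint_inner_left, inner_self_eq_norm_sq_to_K]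
  simp

namespace HilbertBasis

theorem hasSum_norm_inner_sq (b : HilbertBasis ι 𝕜 E) (x : E) :
    HasSum (fun i => ‖⟪b i, x⟫_𝕜‖ ^ 2) (‖x‖ ^ 2) := by
  refine (RCLike.hasSum_ofReal 𝕜).mp ?_
  have h := b.hasSum_inner_mul_inner x x
  rw [inner_self_eq_norm_sq_to_K] at h
  push_cast
  exact h.congr_fun fun i => by rw [← inner_conj_symm x, RCLike.conj_mul]

theorem tsum_enorm_inner_sq (b : HilbertBasis ι 𝕜 E) (x : E) :
    ∑' i, ‖⟪b i, x⟫_𝕜‖ₑ ^ 2 = ‖x‖ₑ ^ 2 := by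
  have h := b.hasSum_norm_inner_sq x
  simp only [← ofReal_norm, ← ENNReal.ofReal_pow (norm_nonneg _)]
  rw [← ENNReal.ofReal_tsum_of_nonneg (fun _ => by positivity) h.summable, h.tsum_eq]

theorem ext_continuousLinearMap (b : HilbertBasis ι 𝕜 E) {T U : E →L[𝕜] F}
    (h : ∀ i, T (b i) = U (b i)) : T = U :=
  ContinuousLinearMap.ext_on (Submodule.dense_iff_topologicalClosure_eq_top.mpr b.dense_span)
    (by rintro _ ⟨i, rfl⟩; exact h i)

variable [CompleteSpace E] [CompleteSpace F]

theorem tsum_enorm_apply_sq_eq_adjoint (b : HilbertBasis ι 𝕜 E) (c : HilbertBasis κ 𝕜 F)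
    (T : E →L[𝕜] F) :
    ∑' i, ‖T (b i)‖ₑ ^ 2 = ∑' j, ‖(T†) (c j)‖ₑ ^ 2 := by
  calc ∑' i, ‖T (b i)‖ₑ ^ 2 = ∑' i, ∑' j, ‖⟪c j, T (b i)⟫_𝕜‖ₑ ^ 2 := by
        simp only [c.tsum_enorm_inner_sq]
    _ = ∑' j, ∑' i, ‖⟪b i, (T†) (c j)⟫_𝕜‖ₑ ^ 2 := by
        rw [ENNReal.tsum_comm]
        simp only [← T.adjoint_inner_left, ← inner_conj_symm (b _), RCLike.enorm_conj]
    _ = ∑' j, ‖(T†) (c j)‖ₑ ^ 2 := by simp only [b.tsum_enorm_inner_sq]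

theorem tsum_enorm_apply_sq_eq_comp_add {P : E →L[𝕜] E} (hP : IsStarProjection P)
    (b : HilbertBasis ι 𝕜 E) (c : HilbertBasis κ 𝕜 F) (T : E →L[𝕜] F) :
    ∑' i, ‖T (b i)‖ₑ ^ 2 =
      ∑' i, ‖(T ∘L P) (b i)‖ₑ ^ 2 + ∑' j, ‖(T†) (c j) - P ((T†) (c j))‖ₑ ^ 2 := by
  rw [tsum_enorm_apply_sq_eq_adjoint b c, tsum_enorm_apply_sq_eq_adjoint b c, adjoint_comp,
    hP.isSelfAdjoint.adjoint_eq, ← ENNReal.tsum_add]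
  exact tsum_congr fun j => hP.enorm_sq_eq_enorm_apply_sq_add _

theorem tsum_inner_adjoint_comp_self_apply (b : HilbertBasis ι 𝕜 E) (T : E →L[𝕜] F) :
    ∑' i, ⟪(T† ∘L T) (b i), b i⟫_𝕜 = ((∑' i, ‖T (b i)‖ₑ ^ 2).toReal : 𝕜) := by
  simp only [inner_adjoint_comp_self_apply_self]
  rw [ENNReal.tsum_toReal_eq (fun _ => by finiteness), RCLike.ofReal_tsum]

theorem tsum_enorm_apply_sq_ne_top (b : HilbertBasis ι 𝕜 E) (T : E →L[𝕜] F)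
    (h : Summable fun i => ⟪(T† ∘L T) (b i), b i⟫_𝕜) :
    ∑' i, ‖T (b i)‖ₑ ^ 2 ≠ ∞ := by
  simp only [inner_adjoint_comp_self_apply_self, RCLike.summable_ofReal] at h
  simp only [enorm_eq_nnnorm, ← ENNReal.coe_pow] at h ⊢
  rw [ENNReal.tsum_coe_ne_top_iff_summable, ← NNReal.summable_coe]
  simpa using h

end HilbertBasis

end

theorem eq_of_trace_eq_trace_proj_general {ι H : Type*}
    [NormedAddCommGroup H] [InnerProductSpace ℂ H] [CompleteSpace H]
    (b : HilbertBasis ι ℂ H) (E C : H →L[ℂ] H)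
    (hE : IsSelfAdjoint E) (hE2 : E ∘L E = E) (hC : C.IsPositive)
    (h1 : Summable fun i => ⟪C (b i), b i⟫_ℂ)
    (heq : ∑' i, ⟪C (b i), b i⟫_ℂ = ∑' i, ⟪(E ∘L C ∘L E) (b i), b i⟫_ℂ) :
    C ∘L E = C ∧ E ∘L C = C := by
  obtain ⟨S, hS⟩ : ∃ S : H →L[ℂ] H, C = S† ∘L S :=
    CStarAlgebra.nonneg_iff_eq_star_mul_self.mp ((nonneg_iff_isPositive C).mpr hC)
  have hP : IsStarProjection E := ⟨hE2, hE⟩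
  have hECE : E ∘L C ∘L E = (S ∘L E)† ∘L (S ∘L E) := by
    rw [hS, adjoint_comp, hE.adjoint_eq]; rfl
  have hsplit := b.tsum_enorm_apply_sq_eq_comp_add hP b S
  have hdefect : ∑' j, ‖(S†) (b j) - E ((S†) (b j))‖ₑ ^ 2 = 0 := by
    have hfin := b.tsum_enorm_apply_sq_ne_top S (hS ▸ h1)
    rw [hsplit] at hfin
    obtain ⟨hB, hD⟩ := ENNReal.add_ne_top.mp hfin
    rw [hECE, hS, b.tsum_inner_adjoint_comp_self_apply, b.tsum_inner_adjoint_comp_self_apply,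
      hsplit, ENNReal.toReal_add hB hD, RCLike.ofReal_inj, add_eq_left,
      ENNReal.toReal_eq_zero_iff] at heq
    exact heq.resolve_right hD
  have hES : E ∘L S† = S† := b.ext_continuousLinearMap fun i =>
    (sub_eq_zero.mp (by simpa using ENNReal.tsum_eq_zero.mp hdefect i)).symm
  have hEC : E ∘L C = C := by rw [hS, ← comp_assoc, hES]
  refine ⟨?_, hEC⟩
  calc C ∘L E = (E ∘L C)† := by rw [adjoint_comp, hE.adjoint_eq, hC.isSelfAdjoint.adjoint_eq]
    _ = C := by rw [hEC, hC.isSelfAdjoint.adjoint_eq]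

/-- **Lemma 3.3.** If `E` is an orthogonal projection and `C` a positive trace-class
operator with `tr C = tr (E C E)`, then `C = C E = E C`. -/
theorem eq_of_trace_eq_trace_proj {ι H : Type*}
    [NormedAddCommGroup H] [InnerProductSpace ℂ H] [CompleteSpace H]
    (b : HilbertBasis ι ℂ H) (E C : H →L[ℂ] H)
    (hE : IsSelfAdjoint E) (hE2 : E ∘L E = E) (hC : C.IsPositive)
    (h1 : Summable fun i => ⟪C (b i), b i⟫_ℂ)
    (h2 : Summable fun i => ⟪(E ∘L C ∘L E) (b i), b i⟫_ℂ)
    (heq : ∑' i, ⟪C (b i), b i⟫_ℂ = ∑' i, ⟪(E ∘L C ∘L E) (b i), b i⟫_ℂ) :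
    C ∘L E = C ∧ E ∘L C = C :=
  eq_of_trace_eq_trace_proj_general b E C hE hE2 hC h1 heq
end

section
/- Let (X, μ) be a σ-finite measure space, let U : L¹_ℝ(X,μ) → L¹_ℝ(X,μ) be a stochastic operator, and let O ∈ L∞_ℝ(X,μ). Then the following are equivalent: (i) U(O·g) = O·U(g) for every g ∈ L¹_ℝ(X,μ), where O·g denotes the pointwise (a.e.) product, an element of L¹_ℝ(X,μ); (ii) for every probability distribution g ∈ L¹_ℝ(X,μ) (g ≥ 0 a.e. and ∫ g dμ = 1) one has ∫ O·(U g) dμ = ∫ O·g dμ and ∫ O²·(U g) dμ = ∫ O²·g dμ. -/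
open MeasureTheory ENNReal

set_option maxHeartbeats 1000000

section
variable {X : Type*} [MeasurableSpace X] {μ : Measure X}

lemma coe_comb (a b : Lp ℝ 1 μ) (r : ℝ) :
    (⇑(a + r • b) : X → ℝ) =ᵐ[μ] fun x => a x + r * b x := by
  filter_upwards [Lp.coeFn_add a (r • b), Lp.coeFn_smul r b] with x h1 h2
  rw [h1]; simp only [Pi.add_apply]; rw [h2]; simp

lemma coe_smul' (r : ℝ) (h : Lp ℝ 1 μ) :
    (⇑(r • h) : X → ℝ) =ᵐ[μ] fun x => r * h x := by
  filter_upwards [Lp.coeFn_smul r h] with x h1; rw [h1]; simp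

lemma int_smul' (r : ℝ) (h : Lp ℝ 1 μ) :
    ∫ x, (r • h) x ∂μ = r * ∫ x, h x ∂μ := by
  rw [integral_congr_ae (coe_smul' r h), integral_const_mul]

lemma int_comb (a b : Lp ℝ 1 μ) (r : ℝ) :
    ∫ x, (a + r • b) x ∂μ = ∫ x, a x ∂μ + r * ∫ x, b x ∂μ := by
  rw [integral_congr_ae (coe_comb a b r),
    integral_add (L1.integrable_coeFn a) ((L1.integrable_coeFn b).const_mul r),
    integral_const_mul]

variable (O : Lp ℝ ⊤ μ) (MO : Lp ℝ 1 μ →L[ℝ] Lp ℝ 1 μ)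
variable (hMO : ∀ g : Lp ℝ 1 μ, (⇑(MO g) : X → ℝ) =ᵐ[μ] fun x => O x * g x)

include hMO

lemma mul_int (h : Lp ℝ 1 μ) : Integrable (fun x => O x * h x) μ :=
  (L1.integrable_coeFn (MO h)).congr (hMO h)

lemma hMO2 (h : Lp ℝ 1 μ) :
    (⇑(MO (MO h)) : X → ℝ) =ᵐ[μ] fun x => O x * O x * h x := by
  filter_upwards [hMO (MO h), hMO h] with x h1 h2
  rw [h1, h2, mul_assoc]

lemma mul2_int (h : Lp ℝ 1 μ) : Integrable (fun x => O x * O x * h x) μ :=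
  (L1.integrable_coeFn (MO (MO h))).congr (hMO2 O MO hMO h)

lemma intO_smul (r : ℝ) (h : Lp ℝ 1 μ) :
    ∫ x, O x * (r • h) x ∂μ = r * ∫ x, O x * h x ∂μ := by
  rw [show (∫ x, O x * (r • h) x ∂μ) = ∫ x, r * (O x * h x) ∂μ from
    integral_congr_ae (by filter_upwards [coe_smul' r h] with x h1; rw [h1]; ring),
    integral_const_mul]

lemma intOO_smul (r : ℝ) (h : Lp ℝ 1 μ) :
    ∫ x, O x * O x * (r • h) x ∂μ = r * ∫ x, O x * O x * h x ∂μ := by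
  rw [show (∫ x, O x * O x * (r • h) x ∂μ) = ∫ x, r * (O x * O x * h x) ∂μ from
    integral_congr_ae (by filter_upwards [coe_smul' r h] with x h1; rw [h1]; ring),
    integral_const_mul]

lemma intO_comb (a b : Lp ℝ 1 μ) (r : ℝ) :
    ∫ x, O x * (a + r • b) x ∂μ = ∫ x, O x * a x ∂μ + r * ∫ x, O x * b x ∂μ := by
  rw [show (∫ x, O x * (a + r • b) x ∂μ) = ∫ x, O x * a x + r * (O x * b x) ∂μ from
    integral_congr_ae (by filter_upwards [coe_comb a b r] with x h1; rw [h1]; ring),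
    integral_add (mul_int O MO hMO a) (((mul_int O MO hMO b)).const_mul r),
    integral_const_mul]

lemma intOO_comb (a b : Lp ℝ 1 μ) (r : ℝ) :
    ∫ x, O x * O x * (a + r • b) x ∂μ
      = ∫ x, O x * O x * a x ∂μ + r * ∫ x, O x * O x * b x ∂μ := by
  rw [show (∫ x, O x * O x * (a + r • b) x ∂μ)
        = ∫ x, O x * O x * a x + r * (O x * O x * b x) ∂μ from
    integral_congr_ae (by filter_upwards [coe_comb a b r] with x h1; rw [h1]; ring),
    integral_add (mul2_int O MO hMO a) (((mul2_int O MO hMO b)).const_mul r),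
    integral_const_mul]

end

section
variable {X : Type*} [MeasurableSpace X] {μ : Measure X}

lemma Obdd (O : Lp ℝ ⊤ μ) :
    ∀ᵐ x ∂μ, |O x| ≤ (eLpNorm (⇑O : X → ℝ) ⊤ μ).toReal := by
  have h1 : ∀ᵐ x ∂μ, (‖O x‖₊ : ℝ≥0∞) ≤ eLpNormEssSup (⇑O : X → ℝ) μ :=
    ae_le_eLpNormEssSup
  have hfin : eLpNorm (⇑O : X → ℝ) ⊤ μ ≠ ⊤ := (Lp.eLpNorm_lt_top O).ne
  rw [eLpNorm_exponent_top] at hfin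
  filter_upwards [h1] with x hx
  have := ENNReal.toReal_mono hfin hx
  simpa [eLpNorm_exponent_top, Real.norm_eq_abs] using this
end

lemma quad_aux {a b c t : ℝ} (hc : 0 ≤ c)
    (hq : ∀ s : ℝ, 0 ≤ a - 2 * s * b + s ^ 2 * c)
    (ht : a - 2 * (t * b) + t * t * c = 0) : b = t * c := by
  by_contra hne
  have he0 : b - t * c ≠ 0 := fun h => hne (by linarith)
  set e : ℝ := b - t * c with he
  set δ : ℝ := 1 / (2 * (c + 1)) with hδdef
  have hδ : (0:ℝ) < δ := by positivity
  have hmul : δ * (2 * (c + 1)) = 1 := by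
    rw [hδdef]; field_simp
  have h1 := hq (t + e * δ)
  have he2 : 0 < e ^ 2 := by positivity
  have h2 : (0:ℝ) ≤ -2 * e ^ 2 * δ + e ^ 2 * δ ^ 2 * c := by
    have heq : -2 * e ^ 2 * δ + e ^ 2 * δ ^ 2 * c =
        (a - 2 * (t + e * δ) * b + (t + e * δ) ^ 2 * c) - (a - 2 * (t * b) + t * t * c) := by
      rw [he]; ring
    rw [heq]; linarith
  have hδc : δ * c < 2 := by nlinarith
  nlinarith [mul_pos he2 hδ, mul_pos (mul_pos he2 hδ) hδ]

section Main
variable {X : Type*} [MeasurableSpace X] {μ : Measure X}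

theorem aux_comm
    (U : Lp ℝ 1 μ →L[ℝ] Lp ℝ 1 μ)
    (hUpos : ∀ g : Lp ℝ 1 μ, 0 ≤ᵐ[μ] (⇑g : X → ℝ) → 0 ≤ᵐ[μ] (⇑(U g) : X → ℝ))
    (hUint : ∀ g : Lp ℝ 1 μ, ∫ x, U g x ∂μ = ∫ x, g x ∂μ)
    (O : Lp ℝ ⊤ μ) (MO : Lp ℝ 1 μ →L[ℝ] Lp ℝ 1 μ)
    (hMO : ∀ g : Lp ℝ 1 μ, (⇑(MO g) : X → ℝ) =ᵐ[μ] fun x => O x * g x)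
    (hexp : ∀ g : Lp ℝ 1 μ, 0 ≤ᵐ[μ] (⇑g : X → ℝ) → ∫ x, g x ∂μ = 1 →
        (∫ x, O x * U g x ∂μ = ∫ x, O x * g x ∂μ ∧
         ∫ x, O x * O x * U g x ∂μ = ∫ x, O x * O x * g x ∂μ))
    (g : Lp ℝ 1 μ) (hg0 : 0 ≤ᵐ[μ] (⇑g : X → ℝ)) (hg1 : ∫ x, g x ∂μ = 1) :
    U (MO g) = MO (U g) := by
  obtain ⟨e0, e0'⟩ := hexp g hg0 hg1
  set C : ℝ := (eLpNorm (⇑O : X → ℝ) ⊤ μ).toReal with hCdef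
  have hC0 : 0 ≤ C := ENNReal.toReal_nonneg
  have hOb : ∀ᵐ x ∂μ, |O x| ≤ C := Obdd O
  set ε : ℝ := 1 / (2 * (C + 1)) with hεdef
  have hε : 0 < ε := by positivity
  have hεC : ε * C ≤ 1 / 2 := by
    rw [hεdef, div_mul_eq_mul_div, one_mul, div_le_div_iff₀ (by positivity) (by norm_num)]
    linarith
  set J : ℝ := ∫ x, O x * g x ∂μ with hJdef
  have hJ : |J| ≤ C := by
    rw [hJdef]
    calc |∫ x, O x * g x ∂μ| ≤ ∫ x, |O x * g x| ∂μ := by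
          have := norm_integral_le_integral_norm (fun x => O x * g x) (μ := μ)
          simpa only [Real.norm_eq_abs] using this
    _ ≤ ∫ x, C * g x ∂μ := by
        refine integral_mono_ae ((mul_int O MO hMO g).abs) ((L1.integrable_coeFn g).const_mul C) ?_
        filter_upwards [hOb, hg0] with x h1 h2
        rw [abs_mul, abs_of_nonneg h2]
        exact mul_le_mul_of_nonneg_right h1 h2
    _ = C := by rw [integral_const_mul, hg1, mul_one]
  have ht : 0 < 1 + ε * J := by nlinarith [abs_le.mp hJ, mul_le_mul_of_nonneg_left (abs_le.mp hJ).1 hε.le]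
  -- the perturbed probability distribution
  have hgε0 : 0 ≤ᵐ[μ] (⇑(g + ε • MO g) : X → ℝ) := by
    filter_upwards [coe_comb g (MO g) ε, hMO g, hOb, hg0] with x h1 h2 h3 h4
    simp only [Pi.zero_apply] at h4 ⊢
    rw [h1, h2]
    have h5 : -C ≤ O x := (abs_le.mp h3).1
    nlinarith [mul_le_mul_of_nonneg_left (mul_le_mul_of_nonneg_right h5 h4) hε.le,
      mul_le_mul_of_nonneg_right hεC h4]
  have hgεint : ∫ x, (g + ε • MO g) x ∂μ = 1 + ε * J := by
    rw [int_comb, hg1, integral_congr_ae (hMO g)]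
  -- apply the hypothesis to the normalized perturbed distribution
  have hprob0 : 0 ≤ᵐ[μ] (⇑((1 + ε * J)⁻¹ • (g + ε • MO g)) : X → ℝ) := by
    filter_upwards [coe_smul' (1 + ε * J)⁻¹ (g + ε • MO g), hgε0] with x h1 h2
    simp only [Pi.zero_apply] at h2 ⊢
    rw [h1]
    exact mul_nonneg (inv_nonneg.mpr ht.le) h2
  have hprob1 : ∫ x, ((1 + ε * J)⁻¹ • (g + ε • MO g)) x ∂μ = 1 := by
    rw [int_smul', hgεint, inv_mul_cancel₀ ht.ne']
  obtain ⟨f1, -⟩ := hexp _ hprob0 hprob1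
  rw [_root_.map_smul, intO_smul O MO hMO, intO_smul O MO hMO] at f1
  have f1' : ∫ x, O x * U (g + ε • MO g) x ∂μ = ∫ x, O x * (g + ε • MO g) x ∂μ :=
    mul_left_cancel₀ (inv_ne_zero ht.ne') f1
  have hUgε : U (g + ε • MO g) = U g + ε • U (MO g) := by rw [_root_.map_add, _root_.map_smul]
  rw [hUgε, intO_comb O MO hMO, intO_comb O MO hMO] at f1'
  have hOMOg : ∫ x, O x * (MO g) x ∂μ = ∫ x, O x * O x * g x ∂μ :=
    integral_congr_ae (by filter_upwards [hMO g] with x h1; rw [h1, mul_assoc])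
  rw [hOMOg, e0] at f1'
  have key1 : ∫ x, O x * U (MO g) x ∂μ = ∫ x, O x * O x * g x ∂μ :=
    mul_left_cancel₀ hε.ne' (by linarith)
  -- positivity of the quadratic form, for all rational (hence real) coefficients
  have hCg0 : 0 ≤ᵐ[μ] (⇑(U g) : X → ℝ) := hUpos g hg0
  have hrat : ∀ q : ℚ, ∀ᵐ x ∂μ,
      0 ≤ U (MO (MO g)) x - 2 * (q:ℝ) * U (MO g) x + (q:ℝ)^2 * U g x := by
    intro q
    set c : ℝ := (q:ℝ) with hcdef
    have harg : (⇑(MO (MO g) + (-(2*c)) • MO g + c^2 • g) : X → ℝ)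
        =ᵐ[μ] fun x => (O x - c)^2 * g x := by
      filter_upwards [coe_comb (MO (MO g) + (-(2*c)) • MO g) g (c^2),
        coe_comb (MO (MO g)) (MO g) (-(2*c)), hMO2 O MO hMO g, hMO g] with x h1 h2 h3 h4
      rw [h1, h2, h3, h4]; ring
    have hpos_arg : 0 ≤ᵐ[μ] (⇑(MO (MO g) + (-(2*c)) • MO g + c^2 • g) : X → ℝ) := by
      filter_upwards [harg, hg0] with x h1 h2
      simp only [Pi.zero_apply] at h2 ⊢
      rw [h1]
      exact mul_nonneg (sq_nonneg _) h2
    have h5 := hUpos _ hpos_arg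
    have hUlin : U (MO (MO g) + (-(2*c)) • MO g + c^2 • g)
        = U (MO (MO g)) + (-(2*c)) • U (MO g) + c^2 • U g := by
      rw [_root_.map_add, _root_.map_add, _root_.map_smul, _root_.map_smul]
    rw [hUlin] at h5
    filter_upwards [h5, coe_comb (U (MO (MO g)) + (-(2*c)) • U (MO g)) (U g) (c^2),
      coe_comb (U (MO (MO g))) (U (MO g)) (-(2*c))] with x p1 p2 p3
    simp only [Pi.zero_apply] at p1
    rw [p2, p3] at p1
    linarith [p1]
  have hq : ∀ᵐ x ∂μ, ∀ s : ℝ,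
      0 ≤ U (MO (MO g)) x - 2 * s * U (MO g) x + s^2 * U g x := by
    have h6 : ∀ᵐ x ∂μ, ∀ q : ℚ,
        0 ≤ U (MO (MO g)) x - 2 * (q:ℝ) * U (MO g) x + (q:ℝ)^2 * U g x :=
      ae_all_iff.mpr hrat
    filter_upwards [h6] with x hx s
    by_contra hlt
    push_neg at hlt
    have hcont : Continuous fun s : ℝ =>
        U (MO (MO g)) x - 2 * s * U (MO g) x + s^2 * U g x := by fun_prop
    have hopen : IsOpen {s : ℝ |
        U (MO (MO g)) x - 2 * s * U (MO g) x + s^2 * U g x < 0} :=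
      isOpen_lt hcont continuous_const
    obtain ⟨q, hqmem⟩ := (Rat.denseRange_cast (𝕜 := ℝ)).exists_mem_open hopen ⟨s, hlt⟩
    exact absurd hqmem (not_lt.mpr (hx q))
  -- the nonnegative function with zero integral
  have hF0 : 0 ≤ᵐ[μ] fun x =>
      U (MO (MO g)) x - 2 * (O x * U (MO g) x) + O x * O x * U g x := by
    filter_upwards [hq] with x hx
    simp only [Pi.zero_apply]
    have h := hx (O x)
    linarith [h]
  have iA : Integrable (⇑(U (MO (MO g))) : X → ℝ) μ := L1.integrable_coeFn _
  have iB : Integrable (fun x => O x * U (MO g) x) μ := mul_int O MO hMO _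
  have iC2 : Integrable (fun x => O x * O x * U g x) μ := mul2_int O MO hMO _
  have iAB : Integrable (fun x => U (MO (MO g)) x - 2 * (O x * U (MO g) x)) μ :=
    iA.sub (iB.const_mul 2)
  have hFint : Integrable (fun x =>
      U (MO (MO g)) x - 2 * (O x * U (MO g) x) + O x * O x * U g x) μ :=
    iAB.add iC2
  have hFint0 : ∫ x, (U (MO (MO g)) x - 2 * (O x * U (MO g) x)
      + O x * O x * U g x) ∂μ = 0 := by
    rw [integral_add iAB iC2, integral_sub iA (iB.const_mul 2),
      integral_const_mul]
    have hA : ∫ x, U (MO (MO g)) x ∂μ = ∫ x, O x * O x * g x ∂μ := by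
      rw [hUint (MO (MO g))]; exact integral_congr_ae (hMO2 O MO hMO g)
    rw [hA, key1, e0']; ring
  have hFz : (fun x => U (MO (MO g)) x - 2 * (O x * U (MO g) x)
      + O x * O x * U g x) =ᵐ[μ] 0 :=
    (integral_eq_zero_iff_of_nonneg_ae hF0 hFint).mp hFint0
  -- pointwise conclusion
  have final : (⇑(U (MO g)) : X → ℝ) =ᵐ[μ] fun x => O x * U g x := by
    filter_upwards [hq, hFz, hCg0] with x h1 h2 h3
    simp only [Pi.zero_apply] at h2 h3
    exact quad_aux h3 h1 (by nlinarith [h2])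
  exact Lp.ext (final.trans (hMO (U g)).symm)

end Main

section Ext
variable {X : Type*} [MeasurableSpace X] {μ : Measure X}

theorem aux_comm_nonneg
    (U : Lp ℝ 1 μ →L[ℝ] Lp ℝ 1 μ)
    (hUpos : ∀ g : Lp ℝ 1 μ, 0 ≤ᵐ[μ] (⇑g : X → ℝ) → 0 ≤ᵐ[μ] (⇑(U g) : X → ℝ))
    (hUint : ∀ g : Lp ℝ 1 μ, ∫ x, U g x ∂μ = ∫ x, g x ∂μ)
    (O : Lp ℝ ⊤ μ) (MO : Lp ℝ 1 μ →L[ℝ] Lp ℝ 1 μ)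
    (hMO : ∀ g : Lp ℝ 1 μ, (⇑(MO g) : X → ℝ) =ᵐ[μ] fun x => O x * g x)
    (hexp : ∀ g : Lp ℝ 1 μ, 0 ≤ᵐ[μ] (⇑g : X → ℝ) → ∫ x, g x ∂μ = 1 →
        (∫ x, O x * U g x ∂μ = ∫ x, O x * g x ∂μ ∧
         ∫ x, O x * O x * U g x ∂μ = ∫ x, O x * O x * g x ∂μ))
    (g : Lp ℝ 1 μ) (hg0 : 0 ≤ᵐ[μ] (⇑g : X → ℝ)) :
    U (MO g) = MO (U g) := by
  by_cases h0 : ∫ x, g x ∂μ = 0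
  · have hz : (⇑g : X → ℝ) =ᵐ[μ] 0 :=
      (integral_eq_zero_iff_of_nonneg_ae hg0 (L1.integrable_coeFn g)).mp h0
    have hg : g = 0 := Lp.ext (hz.trans (Lp.coeFn_zero ℝ 1 μ).symm)
    rw [hg]
    simp
  · have h1 := aux_comm U hUpos hUint O MO hMO hexp ((∫ x, g x ∂μ)⁻¹ • g)
      (by
        filter_upwards [coe_smul' (∫ x, g x ∂μ)⁻¹ g, hg0] with x p1 p2
        simp only [Pi.zero_apply] at p2 ⊢
        rw [p1]
        exact mul_nonneg (inv_nonneg.mpr (integral_nonneg_of_ae hg0)) p2)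
      (by rw [int_smul', inv_mul_cancel₀ h0])
    rw [_root_.map_smul, _root_.map_smul, _root_.map_smul, _root_.map_smul] at h1
    exact smul_right_injective (Lp ℝ 1 μ) (inv_ne_zero h0) h1

end Ext


/-- **Noether-type theorem for Markov processes, discrete case (Baez–Fong).**
Let `(X, μ)` be a σ-finite measure space, `U` a stochastic operator on `L¹(X, μ; ℝ)`
(positive and integral-preserving), `O ∈ L∞(X, μ; ℝ)` an observable, and `MO` the
multiplication operator by `O` on `L¹`. Then `U` commutes with multiplication by `O` if
and only if for every probability distribution `g` the expected values of `O` and of `O²`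
are preserved by `U`. -/
theorem stochastic_commutes_iff_expected_values_invariant
    {X : Type*} [MeasurableSpace X] (μ : Measure X) [SigmaFinite μ]
    (U : Lp ℝ 1 μ →L[ℝ] Lp ℝ 1 μ)
    (hUpos : ∀ g : Lp ℝ 1 μ, 0 ≤ᵐ[μ] (⇑g : X → ℝ) → 0 ≤ᵐ[μ] (⇑(U g) : X → ℝ))
    (hUint : ∀ g : Lp ℝ 1 μ, ∫ x, U g x ∂μ = ∫ x, g x ∂μ)
    (O : Lp ℝ ⊤ μ)
    (MO : Lp ℝ 1 μ →L[ℝ] Lp ℝ 1 μ)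
    (hMO : ∀ g : Lp ℝ 1 μ, (⇑(MO g) : X → ℝ) =ᵐ[μ] fun x => O x * g x) :
    (∀ g : Lp ℝ 1 μ, U (MO g) = MO (U g)) ↔
      ∀ g : Lp ℝ 1 μ, 0 ≤ᵐ[μ] (⇑g : X → ℝ) → ∫ x, g x ∂μ = 1 →
        (∫ x, O x * U g x ∂μ = ∫ x, O x * g x ∂μ ∧
         ∫ x, O x * O x * U g x ∂μ = ∫ x, O x * O x * g x ∂μ) := by
  constructor
  · intro hcomm g hg0 hg1
    constructor
    · calc ∫ x, O x * U g x ∂μ = ∫ x, (MO (U g)) x ∂μ :=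
            (integral_congr_ae (hMO (U g))).symm
        _ = ∫ x, (U (MO g)) x ∂μ := by rw [hcomm g]
        _ = ∫ x, (MO g) x ∂μ := hUint (MO g)
        _ = ∫ x, O x * g x ∂μ := integral_congr_ae (hMO g)
    · calc ∫ x, O x * O x * U g x ∂μ = ∫ x, (MO (MO (U g))) x ∂μ :=
            (integral_congr_ae (hMO2 O MO hMO (U g))).symm
        _ = ∫ x, (U (MO (MO g))) x ∂μ := by rw [← hcomm g, ← hcomm (MO g)]
        _ = ∫ x, (MO (MO g)) x ∂μ := hUint (MO (MO g))
        _ = ∫ x, O x * O x * g x ∂μ := integral_congr_ae (hMO2 O MO hMO g)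
  · intro hexp g
    have hdecomp : g = Lp.posPart g - Lp.negPart g := by
      refine (Lp.ext ?_).symm
      filter_upwards [Lp.coeFn_sub (Lp.posPart g) (Lp.negPart g), Lp.coeFn_posPart g,
        Lp.coeFn_negPart g] with x h1 h2 h3
      rw [h1]
      simp only [Pi.sub_apply]
      rw [h2, h3, sub_neg_eq_add, max_add_min, add_zero]
    have hppos : 0 ≤ᵐ[μ] (⇑(Lp.posPart g) : X → ℝ) := by
      filter_upwards [Lp.coeFn_posPart g] with x h
      simp only [Pi.zero_apply]
      rw [h]
      exact le_max_right _ _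
    have hnpos : 0 ≤ᵐ[μ] (⇑(Lp.negPart g) : X → ℝ) := by
      filter_upwards [Lp.coeFn_negPart g] with x h
      simp only [Pi.zero_apply]
      rw [h]
      simp [min_le_right (g x) 0]
    have hp := aux_comm_nonneg U hUpos hUint O MO hMO hexp (Lp.posPart g) hppos
    have hn := aux_comm_nonneg U hUpos hUint O MO hMO hexp (Lp.negPart g) hnpos
    rw [hdecomp]
    simp only [map_sub]
    rw [hp, hn]
end

section
/- Let (X, μ) be a σ-finite measure space, let (U_t)_{t ≥ 0} be a strongly continuous one-parameter semigroup of stochastic operators on L¹_ℝ(X,μ) (U_0 = id, U_{s+t} = U_s ∘ U_t, and t ↦ U_t g is continuous in L¹-norm for each g), and let O ∈ L∞_ℝ(X,μ). Then the following are equivalent: (i) U_t(O·g) = O·U_t(g) for all t ≥ 0 and all g ∈ L¹_ℝ(X,μ); (ii) for every probability distribution g (g ∈ L¹, g ≥ 0 a.e., ∫ g dμ = 1), the functions t ↦ ∫ O·(U_t g) dμ and t ↦ ∫ O²·(U_t g) dμ are constant on [0,∞); (iii) for every g ∈ L¹_ℝ(X,μ), both (∫ O·(U_t g) dμ − ∫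 O·g dμ)/t → 0 and (∫ O²·(U_t g) dμ − ∫ O²·g dμ)/t → 0 as t → 0+. -/
open MeasureTheory Filter Topology

/-!
The integral and the expectations `g ↦ ∫ O·g`, `g ↦ ∫ O²·g` are linear functionals on `L¹`, so
the invariance in (ii) extends from probability densities to all of `L¹` (split `g = g⁺ - g⁻`
and normalise), and (iii) upgrades to the same invariance because, by the semigroup law,
`s ↦ ∫ O·U_s g` has vanishing right derivative at every `s ≥ 0`.

For the converse fix `g ≥ 0` and put `a = U_t g`, `b = U_t(O·g)`, `c = U_t(O²·g)`. Positivity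
of `U_t` on `(O - r)²·g` gives `a r² - 2 b r + c ≥ 0` a.e. for all real `r`, hence `b² ≤ a c`.
The nonnegative function `a O² - 2 b O + c` has integral `∫O²g - 2∫O²g + ∫O²g = 0`, so it
vanishes a.e., and then `(O a - b)² ≤ a (a O² - 2 b O + c) = 0`, i.e. `U_t(O·g) = O·U_t g`.
-/

theorem AddMonoidHomClass.ext_of_nonneg {α β 𝓕 : Type*} [Lattice α] [AddGroup α] [AddLeftMono α]
    [AddGroup β] [FunLike 𝓕 α β] [AddMonoidHomClass 𝓕 α β] {f g : 𝓕}
    (h : ∀ a, 0 ≤ a → f a = g a) : f = g :=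
  DFunLike.ext f g fun a => by
    rw [← posPart_sub_negPart a, map_sub, map_sub, h _ (posPart_nonneg a),
      h _ (negPart_nonneg a)]

theorem eq_mul_of_quadratic_nonneg_of_eq_zero {a b c o : ℝ} (ha : 0 ≤ a)
    (hnonneg : ∀ r, 0 ≤ a * (r * r) + (-2 * b) * r + c)
    (hzero : a * (o * o) + (-2 * b) * o + c = 0) : b = o * a := by
  have hdiscr := discrim_le_zero hnonneg
  rw [discrim] at hdiscr
  nlinarith [sq_nonneg (o * a - b)]

theorem apply_eq_of_tendsto_slope_zero {E : Type*} [TopologicalSpace E] [AddCommMonoid E]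
    [Module ℝ E] {U : ℝ → E →L[ℝ] E} (h0 : U 0 = ContinuousLinearMap.id ℝ E)
    (hsemi : ∀ s t : ℝ, 0 ≤ s → 0 ≤ t → U (s + t) = (U s).comp (U t))
    (hcont : ∀ g : E, ContinuousOn (fun t : ℝ => U t g) (Set.Ici 0))
    {φ : E → ℝ} (hφ : Continuous φ)
    (hslope : ∀ h : E, Tendsto (fun t : ℝ => t⁻¹ * (φ (U t h) - φ h)) (𝓝[>] 0) (𝓝 0))
    {t : ℝ} (ht : 0 ≤ t) (g : E) : φ (U t g) = φ g := by
  have hderiv : ∀ s ∈ Set.Ico 0 t, HasDerivWithinAt (fun s => φ (U s g)) 0 (Set.Ici s) s := by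
    intro s hs
    have hshift : ∀ u, s ≤ u → U (u - s) (U s g) = U u g := fun u hsu => by
      rw [← ContinuousLinearMap.comp_apply, ← hsemi _ _ (sub_nonneg.mpr hsu) hs.1, sub_add_cancel]
    have hslope_at : HasDerivWithinAt (fun u => φ (U u (U s g))) 0 (Set.Ioi 0) 0 := by
      have : slope (fun u => φ (U u (U s g))) 0 =
          fun u => u⁻¹ * (φ (U u (U s g)) - φ (U s g)) := by
        funext u
        simp [slope_def_field, div_eq_inv_mul, h0]
      rw [hasDerivWithinAt_iff_tendsto_slope' Set.self_notMem_Ioi, this]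
      exact hslope (U s g)
    have hcomp : HasDerivWithinAt (fun u => φ (U (u - s) (U s g))) 0 (Set.Ici s) s := by
      simpa [Function.comp_def] using hslope_at.scomp_of_eq s
        ((hasDerivWithinAt_id s (Set.Ioi s)).sub_const s) (fun u (hu : s < u) => sub_pos.mpr hu)
        (sub_self s).symm
    exact hcomp.congr (fun u hu => by rw [hshift u hu]) (by rw [hshift s le_rfl])
  have := constant_of_has_deriv_right_zero ((hφ.comp_continuousOn (hcont g)).mono
    Set.Icc_subset_Ici_self) hderiv t ⟨ht, le_rfl⟩
  simpa [h0] using this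

namespace MeasureTheory.L1

variable {α : Type*} [MeasurableSpace α] {μ : Measure α}

theorem integralCLM_apply (f : α →₁[μ] ℝ) : integralCLM f = ∫ x, f x ∂μ := by
  rw [← integral_eq, integral_eq_integral]

theorem eq_zero_of_nonneg_of_integral_eq_zero {f : α →₁[μ] ℝ} (hf : 0 ≤ f)
    (h : ∫ x, f x ∂μ = 0) : f = 0 := by
  refine Lp.ext ((integral_eq_zero_iff_of_nonneg_ae ?_ (integrable_coeFn f)).mp h |>.trans
    (Lp.coeFn_zero ℝ 1 μ).symm)
  exact (Lp.coeFn_nonneg f).mpr hf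

theorem integral_apply_eq_of_eq_on_densities {A B : (α →₁[μ] ℝ) →L[ℝ] α →₁[μ] ℝ}
    (h : ∀ g : α →₁[μ] ℝ, 0 ≤ g → ∫ x, g x ∂μ = 1 → ∫ x, A g x ∂μ = ∫ x, B g x ∂μ)
    (g : α →₁[μ] ℝ) : ∫ x, A g x ∂μ = ∫ x, B g x ∂μ := by
  suffices integralCLM.comp A = integralCLM.comp B by
    simpa only [ContinuousLinearMap.comp_apply, integralCLM_apply] using DFunLike.congr_fun this g
  refine AddMonoidHomClass.ext_of_nonneg fun g hg => ?_
  rcases (integral_nonneg_of_ae ((Lp.coeFn_nonneg g).mpr hg)).eq_or_lt with hzero | hpos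
  · rw [eq_zero_of_nonneg_of_integral_eq_zero hg hzero.symm, map_zero, map_zero]
  set c := ∫ x, g x ∂μ
  have hnonneg : 0 ≤ c⁻¹ • g := (Lp.coeFn_nonneg _).mp <| by
    filter_upwards [Lp.coeFn_smul c⁻¹ g, (Lp.coeFn_nonneg g).mpr hg] with x hx hgx
    rw [hx, Pi.smul_apply, Pi.zero_apply, smul_eq_mul]
    exact mul_nonneg (inv_nonneg.mpr hpos.le) hgx
  have hdensity : ∫ x, (c⁻¹ • g) x ∂μ = 1 := by
    rw [← integralCLM_apply, map_smul, integralCLM_apply, smul_eq_mul, inv_mul_cancel₀ hpos.ne']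
  have := h (c⁻¹ • g) hnonneg hdensity
  rw [← integralCLM_apply, ← integralCLM_apply, map_smul, map_smul, map_smul, map_smul,
    smul_eq_mul, smul_eq_mul] at this
  exact mul_left_cancel₀ (inv_ne_zero hpos.ne') this

variable {O : Lp ℝ ⊤ μ} {M : (α →₁[μ] ℝ) →L[ℝ] α →₁[μ] ℝ}

theorem coeFn_sub_smul_one_apply (hM : ∀ g : α →₁[μ] ℝ, ⇑(M g) =ᵐ[μ] fun x => O x * g x)
    (r : ℝ) (g : α →₁[μ] ℝ) : ⇑((M - r • 1) g) =ᵐ[μ] fun x => (O x - r) * g x := by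
  filter_upwards [Lp.coeFn_sub (M g) (r • g), Lp.coeFn_smul r g, hM g] with x hsub hsmul hMg
  simp only [sub_apply, smul_apply, one_apply_eq_self, hsub, Pi.sub_apply, hsmul, Pi.smul_apply,
    hMg, smul_eq_mul]
  ring

theorem apply_mul_eq_mul_apply_of_nonneg
    (hM : ∀ g : α →₁[μ] ℝ, ⇑(M g) =ᵐ[μ] fun x => O x * g x)
    {V : (α →₁[μ] ℝ) →L[ℝ] α →₁[μ] ℝ} (hVpos : ∀ g, 0 ≤ g → 0 ≤ V g)
    (hVint : ∀ g, ∫ x, V g x ∂μ = ∫ x, g x ∂μ)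
    (hVO : ∀ g, ∫ x, M (V g) x ∂μ = ∫ x, M g x ∂μ)
    (hVO2 : ∀ g, ∫ x, M (M (V g)) x ∂μ = ∫ x, M (M g) x ∂μ)
    {g : α →₁[μ] ℝ} (hg : 0 ≤ g) : V (M g) = M (V g) := by
  set a := V g
  set b := V (M g)
  set c := V (M (M g))
  have hquad (r : ℝ) : ∀ᵐ x ∂μ, 0 ≤ a x * (r * r) + (-2 * b x) * r + c x := by
    have hexpand : V ((M - r • 1) ((M - r • 1) g)) = c - (2 * r) • b + (r * r) • a := by
      simp only [sub_apply, smul_apply, one_apply_eq_self, map_sub, map_smul, a, b, c]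
      module
    have hpos : 0 ≤ V ((M - r • 1) ((M - r • 1) g)) := by
      refine hVpos _ ((Lp.coeFn_nonneg _).mp ?_)
      filter_upwards [coeFn_sub_smul_one_apply hM r ((M - r • 1) g),
        coeFn_sub_smul_one_apply hM r g, (Lp.coeFn_nonneg g).mpr hg] with x h1 h2 hgx
      rw [Pi.zero_apply, h1, h2, ← mul_assoc]
      exact mul_nonneg (mul_self_nonneg _) hgx
    rw [hexpand, ← Lp.coeFn_nonneg] at hpos
    filter_upwards [hpos, Lp.coeFn_add (c - (2 * r) • b) ((r * r) • a),
      Lp.coeFn_sub c ((2 * r) • b), Lp.coeFn_smul (2 * r) b, Lp.coeFn_smul (r * r) a]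
      with x hx h1 h2 h3 h4
    simp only [Pi.zero_apply, h1, Pi.add_apply, h2, Pi.sub_apply, h3, h4, Pi.smul_apply,
      smul_eq_mul] at hx
    linarith
  have hquad_all : ∀ᵐ x ∂μ, ∀ r : ℝ, 0 ≤ a x * (r * r) + (-2 * b x) * r + c x := by
    filter_upwards [ae_all_iff.mpr fun q : ℚ => hquad q] with x hx r
    exact Rat.denseRange_cast.induction_on r (isClosed_le continuous_const (by fun_prop)) hx
  set W := M (M a) - (2 : ℝ) • M b + c with hW_def
  have hW : ⇑W =ᵐ[μ] fun x => a x * (O x * O x) + (-2 * b x) * O x + c x := by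
    filter_upwards [Lp.coeFn_add (M (M a) - (2 : ℝ) • M b) c,
      Lp.coeFn_sub (M (M a)) ((2 : ℝ) • M b), Lp.coeFn_smul (2 : ℝ) (M b), hM (M a), hM a, hM b]
      with x h1 h2 h3 h4 h5 h6
    simp only [hW_def, h1, Pi.add_apply, h2, Pi.sub_apply, h3, Pi.smul_apply, h4, h5, h6,
      smul_eq_mul]
    ring
  have hW_nonneg : 0 ≤ W := (Lp.coeFn_nonneg W).mp <| by
    filter_upwards [hW, hquad_all] with x hx hr
    rw [Pi.zero_apply, hx]
    exact hr (O x)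
  have hW_integral : ∫ x, W x ∂μ = 0 := by
    rw [← integralCLM_apply, hW_def]
    simp only [map_add, map_sub, map_smul, smul_eq_mul, integralCLM_apply, a, b, c, hVO2, hVO,
      hVint]
    ring
  have hW_zero : ⇑W =ᵐ[μ] 0 := by
    rw [eq_zero_of_nonneg_of_integral_eq_zero hW_nonneg hW_integral]
    exact Lp.coeFn_zero ℝ 1 μ
  refine Lp.ext ?_
  filter_upwards [hquad_all, hW.symm.trans hW_zero, (Lp.coeFn_nonneg a).mpr (hVpos g hg), hM a]
    with x hr hzero ha hMa
  rw [hMa]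
  exact eq_mul_of_quadratic_nonneg_of_eq_zero ha hr hzero

theorem comp_mul_eq_mul_comp (hM : ∀ g : α →₁[μ] ℝ, ⇑(M g) =ᵐ[μ] fun x => O x * g x)
    {V : (α →₁[μ] ℝ) →L[ℝ] α →₁[μ] ℝ} (hVpos : ∀ g, 0 ≤ g → 0 ≤ V g)
    (hVint : ∀ g, ∫ x, V g x ∂μ = ∫ x, g x ∂μ)
    (hVO : ∀ g, ∫ x, M (V g) x ∂μ = ∫ x, M g x ∂μ)
    (hVO2 : ∀ g, ∫ x, M (M (V g)) x ∂μ = ∫ x, M (M g) x ∂μ) :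
    V.comp M = M.comp V :=
  AddMonoidHomClass.ext_of_nonneg fun _ hg =>
    apply_mul_eq_mul_apply_of_nonneg hM hVpos hVint hVO hVO2 hg

end MeasureTheory.L1

theorem stochastic_semigroup_commutes_iff_expected_values_invariant_general
    {X : Type*} [MeasurableSpace X] (μ : Measure X)
    (U : ℝ → (Lp ℝ 1 μ →L[ℝ] Lp ℝ 1 μ))
    (h0 : U 0 = ContinuousLinearMap.id ℝ (Lp ℝ 1 μ))
    (hsemi : ∀ s t : ℝ, 0 ≤ s → 0 ≤ t → U (s + t) = (U s).comp (U t))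
    (hUpos : ∀ t : ℝ, 0 ≤ t →
      ∀ g : Lp ℝ 1 μ, 0 ≤ᵐ[μ] (⇑g : X → ℝ) → 0 ≤ᵐ[μ] (⇑(U t g) : X → ℝ))
    (hUint : ∀ t : ℝ, 0 ≤ t → ∀ g : Lp ℝ 1 μ, ∫ x, U t g x ∂μ = ∫ x, g x ∂μ)
    (hcont : ∀ g : Lp ℝ 1 μ, ContinuousOn (fun t : ℝ => U t g) (Set.Ici 0))
    (O : Lp ℝ ⊤ μ)
    (MO : Lp ℝ 1 μ →L[ℝ] Lp ℝ 1 μ)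
    (hMO : ∀ g : Lp ℝ 1 μ, (⇑(MO g) : X → ℝ) =ᵐ[μ] fun x => O x * g x) :
    List.TFAE
      [∀ t : ℝ, 0 ≤ t → ∀ g : Lp ℝ 1 μ, U t (MO g) = MO (U t g),
       ∀ g : Lp ℝ 1 μ, 0 ≤ᵐ[μ] (⇑g : X → ℝ) → ∫ x, g x ∂μ = 1 →
         ∀ t : ℝ, 0 ≤ t →
           (∫ x, O x * U t g x ∂μ = ∫ x, O x * g x ∂μ ∧
            ∫ x, O x * O x * U t g x ∂μ = ∫ x, O x * O x * g x ∂μ),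
       ∀ g : Lp ℝ 1 μ,
         Tendsto (fun t : ℝ => t⁻¹ * (∫ x, O x * U t g x ∂μ - ∫ x, O x * g x ∂μ))
           (𝓝[>] (0 : ℝ)) (𝓝 0) ∧
         Tendsto
           (fun t : ℝ => t⁻¹ * (∫ x, O x * O x * U t g x ∂μ - ∫ x, O x * O x * g x ∂μ))
           (𝓝[>] (0 : ℝ)) (𝓝 0)] := by
  have hO (h : Lp ℝ 1 μ) : ∫ x, O x * h x ∂μ = ∫ x, MO h x ∂μ :=
    (integral_congr_ae (hMO h)).symm
  have hO2 (h : Lp ℝ 1 μ) : ∫ x, O x * O x * h x ∂μ = ∫ x, MO (MO h) x ∂μ := by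
    rw [← hO (MO h)]
    refine integral_congr_ae ?_
    filter_upwards [hMO h] with x hx
    rw [hx, mul_assoc]
  simp only [hO, hO2]
  tfae_have 1 → 2 := fun hcomm g _ _ t ht =>
    ⟨by rw [← hcomm t ht, hUint t ht], by rw [← hcomm t ht, ← hcomm t ht, hUint t ht]⟩
  tfae_have 2 → 3 := by
    intro hprob g
    have hinv (t : ℝ) (ht : 0 ≤ t) :
        ∫ x, MO (U t g) x ∂μ = ∫ x, MO g x ∂μ ∧
          ∫ x, MO (MO (U t g)) x ∂μ = ∫ x, MO (MO g) x ∂μ :=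
      ⟨L1.integral_apply_eq_of_eq_on_densities (A := MO.comp (U t)) (B := MO)
        (fun g hg hg1 => (hprob g ((Lp.coeFn_nonneg g).mpr hg) hg1 t ht).1) g,
      L1.integral_apply_eq_of_eq_on_densities (A := MO.comp (MO.comp (U t))) (B := MO.comp MO)
        (fun g hg hg1 => (hprob g ((Lp.coeFn_nonneg g).mpr hg) hg1 t ht).2) g⟩
    constructor <;>
      refine tendsto_const_nhds.congr' (eventually_nhdsWithin_of_forall fun t ht => ?_)
    · simp only [(hinv t (le_of_lt ht)).1, sub_self, mul_zero]
    · simp only [(hinv t (le_of_lt ht)).2, sub_self, mul_zero]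
  tfae_have 3 → 1 := by
    intro hslope t ht g
    have hcontO := continuous_integral.comp MO.continuous
    refine DFunLike.congr_fun (L1.comp_mul_eq_mul_comp hMO (fun g hg => ?_) (hUint t ht)
      (apply_eq_of_tendsto_slope_zero h0 hsemi hcont hcontO (fun h => (hslope h).1) ht)
      (apply_eq_of_tendsto_slope_zero h0 hsemi hcont (hcontO.comp MO.continuous)
        (fun h => (hslope h).2) ht)) g
    exact (Lp.coeFn_nonneg _).mp (hUpos t ht g ((Lp.coeFn_nonneg g).mpr hg))
  tfae_finish

/-- **Noether-type theorem for Markov processes, continuous case (Baez–Fong).**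
Let `(X, μ)` be a σ-finite measure space, `(U_t)_{t ≥ 0}` a strongly continuous
one-parameter semigroup of stochastic operators on `L¹(X, μ; ℝ)`, `O ∈ L∞(X, μ; ℝ)` an
observable, and `MO` the multiplication operator by `O` on `L¹`. Then the following are
equivalent:
(i) every `U_t` commutes with multiplication by `O`;
(ii) for every probability distribution `g`, the expected values of `O` and `O²` with
respect to `U_t g` are constant in `t ≥ 0`;
(iii) for every `g ∈ L¹`, the difference quotients at `t = 0⁺` of the expected values of
`O` and of `O²` vanish (`O` and `O²` lie in the kernel of the weak-* infinitesimal
generator of the dual semigroup). -/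
theorem stochastic_semigroup_commutes_iff_expected_values_invariant
    {X : Type*} [MeasurableSpace X] (μ : Measure X) [SigmaFinite μ]
    (U : ℝ → (Lp ℝ 1 μ →L[ℝ] Lp ℝ 1 μ))
    (h0 : U 0 = ContinuousLinearMap.id ℝ (Lp ℝ 1 μ))
    (hsemi : ∀ s t : ℝ, 0 ≤ s → 0 ≤ t → U (s + t) = (U s).comp (U t))
    (hUpos : ∀ t : ℝ, 0 ≤ t →
      ∀ g : Lp ℝ 1 μ, 0 ≤ᵐ[μ] (⇑g : X → ℝ) → 0 ≤ᵐ[μ] (⇑(U t g) : X → ℝ))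
    (hUint : ∀ t : ℝ, 0 ≤ t → ∀ g : Lp ℝ 1 μ, ∫ x, U t g x ∂μ = ∫ x, g x ∂μ)
    (hcont : ∀ g : Lp ℝ 1 μ, ContinuousOn (fun t : ℝ => U t g) (Set.Ici 0))
    (O : Lp ℝ ⊤ μ)
    (MO : Lp ℝ 1 μ →L[ℝ] Lp ℝ 1 μ)
    (hMO : ∀ g : Lp ℝ 1 μ, (⇑(MO g) : X → ℝ) =ᵐ[μ] fun x => O x * g x) :
    List.TFAE
      [∀ t : ℝ, 0 ≤ t → ∀ g : Lp ℝ 1 μ, U t (MO g) = MO (U t g),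
       ∀ g : Lp ℝ 1 μ, 0 ≤ᵐ[μ] (⇑g : X → ℝ) → ∫ x, g x ∂μ = 1 →
         ∀ t : ℝ, 0 ≤ t →
           (∫ x, O x * U t g x ∂μ = ∫ x, O x * g x ∂μ ∧
            ∫ x, O x * O x * U t g x ∂μ = ∫ x, O x * O x * g x ∂μ),
       ∀ g : Lp ℝ 1 μ,
         Tendsto (fun t : ℝ => t⁻¹ * (∫ x, O x * U t g x ∂μ - ∫ x, O x * g x ∂μ))
           (𝓝[>] (0 : ℝ)) (𝓝 0) ∧
         Tendsto
           (fun t : ℝ => t⁻¹ * (∫ x, O x * O x * U t g x ∂μ - ∫ x, O x * O x * g x ∂μ))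
           (𝓝[>] (0 : ℝ)) (𝓝 0)] :=
  stochastic_semigroup_commutes_iff_expected_values_invariant_general μ U h0 hsemi hUpos hUint hcont
    O MO hMO
end

section
/- Let H be a complex Hilbert space, let Φ : B(H) → B(H) be a unital completely positive linear map (for instance the dual, in the Heisenberg picture, of a quantum operation), and let A ∈ B(H). Then: (1) Φ(S∘A) = Φ(S)∘A for all S ∈ B(H) if and only if Φ(A) = A and Φ(A*∘A) = A*∘A; and (2) Φ(A∘S) = A∘Φ(S) for all S ∈ B(H) if and only if Φ(A) = A and Φ(A∘A*) = A∘A*. -/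
open scoped Matrix

open scoped InnerProductSpace

/-- Generic ring computation used in the multiplicative-domain argument. -/
lemma aux_ring {R : Type*} [Ring R] [StarRing R] (a : R) (p0 p1 p2 q0 q1 q2 : R)
    (h00 : star p0 * p0 + star p1 * p1 + star p2 * p2 = 1)
    (h01 : star p0 * q0 + star p1 * q1 + star p2 * q2 = a)
    (h10 : star q0 * p0 + star q1 * p1 + star q2 * p2 = star a)
    (h11 : star q0 * q0 + star q1 * q1 + star q2 * q2 = star a * a) :
    star (q0 - p0 * a) * (q0 - p0 * a) + star (q1 - p1 * a) * (q1 - p1 * a)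
      + star (q2 - p2 * a) * (q2 - p2 * a) = 0 := by
  have expand : ∀ p q : R, star (q - p * a) * (q - p * a)
      = star q * q - (star q * p) * a - star a * (star p * q) + star a * ((star p * p) * a) := by
    intro p q
    simp only [star_sub, star_mul]
    noncomm_ring
  rw [expand, expand, expand]
  have grouping :
      (star q0 * q0 - (star q0 * p0) * a - star a * (star p0 * q0) + star a * ((star p0 * p0) * a))
      + (star q1 * q1 - (star q1 * p1) * a - star a * (star p1 * q1) + star a * ((star p1 * p1) * a))
      + (star q2 * q2 - (star q2 * p2) * a - star a * (star p2 * q2) + star a * ((star p2 * p2) * a))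
      = (star q0 * q0 + star q1 * q1 + star q2 * q2)
        - (star q0 * p0 + star q1 * p1 + star q2 * p2) * a
        - star a * (star p0 * q0 + star p1 * q1 + star p2 * q2)
        + star a * ((star p0 * p0 + star p1 * p1 + star p2 * p2) * a) := by
    noncomm_ring
  rw [grouping, h00, h01, h10, h11]
  noncomm_ring

lemma aux_sum_star_mul_self_eq_zero {H : Type*} [NormedAddCommGroup H]
    [InnerProductSpace ℂ H] [CompleteSpace H] {n : ℕ} (T : Fin n → (H →L[ℂ] H))
    (h : ∑ k, star (T k) * T k = 0) (j : Fin n) : T j = 0 := by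
  ext v
  have h1 : ∑ k, ‖(T k) v‖ ^ 2 = 0 := by
    have h0 := congrArg (fun X : H →L[ℂ] H => (⟪X v, v⟫_ℂ).re) h
    simp only [ContinuousLinearMap.sum_apply, sum_inner, Complex.re_sum,
      ContinuousLinearMap.star_eq_adjoint, ContinuousLinearMap.adjoint_inner_left,
      ContinuousLinearMap.mul_apply, inner_zero_left, ContinuousLinearMap.zero_apply,
      Complex.zero_re] at h0
    rw [← h0]
    exact Finset.sum_congr rfl fun k _ => (inner_self_eq_norm_sq (𝕜 := ℂ) _).symm
  have h2 : ‖(T j) v‖ ^ 2 = 0 :=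
    (Finset.sum_eq_zero_iff_of_nonneg (fun k _ => by positivity)).mp h1 j (Finset.mem_univ j)
  simpa using pow_eq_zero_iff (n := 2) (by norm_num) |>.mp h2

/-- A completely positive map sends "positive" elements to selfadjoint elements. -/
lemma aux_sa {H : Type*} [NormedAddCommGroup H] [InnerProductSpace ℂ H] [CompleteSpace H]
    (Φ : (H →L[ℂ] H) →ₗ[ℂ] (H →L[ℂ] H)) (hcp : CompletelyPositive (⇑Φ))
    (x : H →L[ℂ] H) : star (Φ (star x * x)) = Φ (star x * x) := by
  obtain ⟨P, hP⟩ := hcp 1 ((Matrix.of fun _ _ : Fin 1 => x)ᴴ * (Matrix.of fun _ _ : Fin 1 => x))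
    ⟨_, rfl⟩
  have := congrFun (congrFun hP 0) 0
  simp only [Matrix.map_apply, Matrix.mul_apply, Matrix.conjTranspose_apply, Fin.sum_univ_one,
    Matrix.of_apply] at this
  rw [this]
  simp [star_mul]

/-- A completely positive linear map is star-preserving. -/
lemma aux_star {H : Type*} [NormedAddCommGroup H] [InnerProductSpace ℂ H] [CompleteSpace H]
    (Φ : (H →L[ℂ] H) →ₗ[ℂ] (H →L[ℂ] H)) (hcp : CompletelyPositive (⇑Φ)) :
    ∀ x, Φ (star x) = star (Φ x) := by
  have sa : ∀ s : H →L[ℂ] H, star s = s → star (Φ s) = Φ s := by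
    intro s hs
    have E : s + s + s + s = star (1 + s) * (1 + s) - star (1 - s) * (1 - s) := by
      rw [star_add, star_sub, star_one, hs]; noncomm_ring
    have hE := congrArg Φ E
    rw [map_sub] at hE
    have h4 : Φ s + Φ s + Φ s + Φ s = Φ (star (1+s) * (1+s)) - Φ (star (1-s) * (1-s)) := by
      rw [← hE, map_add, map_add, map_add]
    have hsa : star (Φ s + Φ s + Φ s + Φ s) = Φ s + Φ s + Φ s + Φ s := by
      rw [h4, star_sub, aux_sa Φ hcp, aux_sa Φ hcp]
    have h2 : (4:ℂ) • star (Φ s) = (4:ℂ) • Φ s := by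
      have l : ∀ y : H →L[ℂ] H, y + y + y + y = (4:ℂ) • y := by intro y; module
      rw [← l, ← l, ← star_add, ← star_add, ← star_add, hsa]
    exact smul_right_injective (H →L[ℂ] H) (by norm_num : (4:ℂ) ≠ 0) h2
  intro x
  set a := x + star x with hadef
  set b := Complex.I • (star x - x) with hbdef
  have hsa : star a = a := by simp [hadef, star_add, add_comm]
  have hsb : star b = b := by
    simp [hbdef, star_smul, star_sub, smul_sub, Complex.star_def, Complex.conj_I, neg_smul, neg_sub]
    module
  have hx : (2:ℂ) • x = a + Complex.I • b := by
    simp only [hadef, hbdef, smul_smul, Complex.I_mul_I]; module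
  have hxs : (2:ℂ) • star x = a - Complex.I • b := by
    simp only [hadef, hbdef, smul_smul, Complex.I_mul_I]; module
  have l := congrArg Φ hxs
  rw [map_smul, map_sub, map_smul] at l
  have r := congrArg (fun y => star y) (congrArg Φ hx)
  simp only [map_smul, map_add, star_smul, star_add, Complex.star_def, Complex.conj_I,
    map_ofNat, neg_smul, sa a hsa, sa b hsb] at r
  have : (2:ℂ) • Φ (star x) = (2:ℂ) • star (Φ x) := by
    rw [l, r]; module
  exact smul_right_injective (H →L[ℂ] H) (by norm_num : (2:ℂ) ≠ 0) this

/-- The multiplicative-domain lemma: if `a` and `a*a` are fixed by a unital completely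
positive map, then `Φ (a* b) = a* Φ(b)` for all `b`. -/
lemma aux_key {H : Type*} [NormedAddCommGroup H] [InnerProductSpace ℂ H] [CompleteSpace H]
    (Φ : (H →L[ℂ] H) →ₗ[ℂ] (H →L[ℂ] H)) (hunital : Φ 1 = 1)
    (hcp : CompletelyPositive (⇑Φ)) (a : H →L[ℂ] H) (ha : Φ a = a)
    (haa : Φ (star a * a) = star a * a) (b : H →L[ℂ] H) :
    Φ (star a * b) = star a * Φ b := by
  set r : Fin 3 → (H →L[ℂ] H) := ![1, a, b] with hr
  set N : Matrix (Fin 3) (Fin 3) (H →L[ℂ] H) :=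
    Matrix.of (fun i j => if i = 0 then r j else 0) with hN
  obtain ⟨P, hP⟩ := hcp 3 (Nᴴ * N) ⟨N, rfl⟩
  have e : ∀ i j, Φ (star (r i) * r j)
      = star (P 0 i) * P 0 j + star (P 1 i) * P 1 j + star (P 2 i) * P 2 j := by
    intro i j
    have h := congrFun (congrFun hP i) j
    simp only [Matrix.map_apply, Matrix.mul_apply, Matrix.conjTranspose_apply,
      Fin.sum_univ_three, hN, Matrix.of_apply, if_true, if_false,
      show ((1:Fin 3) = 0) = False by simp, show ((2:Fin 3) = 0) = False by simp,
      star_zero, zero_mul, mul_zero, add_zero] at h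
    exact h
  have hstar := aux_star Φ hcp
  have e00 : star (P 0 0) * P 0 0 + star (P 1 0) * P 1 0 + star (P 2 0) * P 2 0 = 1 := by
    have := e 0 0; simp only [hr] at this
    rw [← this]; simp [hunital]
  have e01 : star (P 0 0) * P 0 1 + star (P 1 0) * P 1 1 + star (P 2 0) * P 2 1 = a := by
    have := e 0 1; simp only [hr] at this
    rw [← this]; simp [ha]
  have e10 : star (P 0 1) * P 0 0 + star (P 1 1) * P 1 0 + star (P 2 1) * P 2 0 = star a := by
    have := e 1 0; simp only [hr] at this
    rw [← this]; simp [hstar a, ha]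
  have e11 : star (P 0 1) * P 0 1 + star (P 1 1) * P 1 1 + star (P 2 1) * P 2 1
      = star a * a := by
    have := e 1 1; simp only [hr] at this
    rw [← this]; simp [haa]
  have hT := aux_ring a (P 0 0) (P 1 0) (P 2 0) (P 0 1) (P 1 1) (P 2 1) e00 e01 e10 e11
  have hT' : ∀ k : Fin 3, (fun k => P k 1 - P k 0 * a) k = 0 := by
    apply aux_sum_star_mul_self_eq_zero
    rw [Fin.sum_univ_three]
    exact hT
  have hq : ∀ k : Fin 3, P k 1 = P k 0 * a := by
    intro k
    have := hT' k
    simpa [sub_eq_zero] using this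
  have e12 := e 1 2
  have e02 := e 0 2
  simp only [hr, Matrix.cons_val_zero, Matrix.cons_val_one, Matrix.head_cons,
    Matrix.cons_val_two, Matrix.tail_cons, star_one, one_mul] at e12 e02
  rw [e12, e02, hq 0, hq 1, hq 2]
  simp only [star_mul, mul_add, mul_assoc]

/-- **Noether-type theorem for discrete quantum semigroups (Theorems 5.2 & 5.3).**
Let `Φ : B(H) → B(H)` be a unital completely positive linear map (the Heisenberg-picture
dual of a quantum operation), and `A ∈ B(H)`. Then:
(1) `Φ` commutes with right multiplication by `A` iff `A` and `A*A` are fixed by `Φ`;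
(2) `Φ` commutes with left multiplication by `A` iff `A` and `AA*` are fixed by `Φ`. -/
theorem right_left_multiplication_commutes_iff_fixed {H : Type*}
    [NormedAddCommGroup H] [InnerProductSpace ℂ H] [CompleteSpace H]
    (Φ : (H →L[ℂ] H) →ₗ[ℂ] (H →L[ℂ] H)) (hunital : Φ 1 = 1)
    (hcp : CompletelyPositive (⇑Φ)) (A : H →L[ℂ] H) :
    ((∀ S : H →L[ℂ] H, Φ (S * A) = Φ S * A) ↔
      (Φ A = A ∧ Φ (star A * A) = star A * A)) ∧
    ((∀ S : H →L[ℂ] H, Φ (A * S) = A * Φ S) ↔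
      (Φ A = A ∧ Φ (A * star A) = A * star A)) := by
  have hstar := aux_star Φ hcp
  constructor
  · constructor
    · intro h
      have h1 : Φ A = A := by simpa [hunital] using h 1
      refine ⟨h1, ?_⟩
      rw [h (star A), hstar, h1]
    · rintro ⟨h1, h2⟩ S
      have k := aux_key Φ hunital hcp A h1 h2 (star S)
      calc Φ (S * A) = star (star (Φ (S * A))) := by rw [star_star]
        _ = star (Φ (star (S * A))) := by rw [hstar]
        _ = star (Φ (star A * star S)) := by rw [star_mul]
        _ = star (star A * Φ (star S)) := by rw [k]
        _ = star (Φ (star S)) * A := by rw [star_mul, star_star]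
        _ = Φ S * A := by rw [hstar, star_star]
  · constructor
    · intro h
      have h1 : Φ A = A := by simpa [hunital] using h 1
      refine ⟨h1, ?_⟩
      rw [h (star A), hstar, h1]
    · rintro ⟨h1, h2⟩ S
      have hA' : Φ (star A) = star A := by rw [hstar, h1]
      have h2' : Φ (star (star A) * star A) = star (star A) * star A := by
        simpa [star_star] using h2
      have k := aux_key Φ hunital hcp (star A) hA' h2' S
      simpa [star_star] using k
end

section
/- Let H be a complex Hilbert space, let U₁, U₂ ∈ B(H) be unitary operators, and let E ∈ B(H) be an orthogonal projection (E = E* and E ∘ E = E) such that U₁* ∘ E ∘ U₁ + U₂* ∘ E ∘ U₂ = 2E. Then E commutes with both unitaries: E ∘ U₁ = U₁ ∘ E and E ∘ U₂ = U₂ ∘ E. -/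
open scoped InnerProductSpace

/-- **Key step of Lemma 5.9.** Let `U₁, U₂ ∈ B(H)` be unitary operators and `E` an
orthogonal projection such that `U₁* E U₁ + U₂* E U₂ = 2E`. Then `E` commutes with both
`U₁` and `U₂`. -/
theorem proj_commutes_of_average_fixed {H : Type*}
    [NormedAddCommGroup H] [InnerProductSpace ℂ H] [CompleteSpace H]
    (U₁ U₂ E : H →L[ℂ] H)
    (hU₁ : star U₁ * U₁ = 1) (hU₁' : U₁ * star U₁ = 1)
    (hU₂ : star U₂ * U₂ = 1) (hU₂' : U₂ * star U₂ = 1)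
    (hE : IsSelfAdjoint E) (hE2 : E * E = E)
    (h : star U₁ * E * U₁ + star U₂ * E * U₂ = (2 : ℂ) • E) :
    E * U₁ = U₁ * E ∧ E * U₂ = U₂ * E := by
  have hsym : ∀ x y : H, ⟪E x, y⟫_ℂ = ⟪x, E y⟫_ℂ :=
    fun x y => (ContinuousLinearMap.isSelfAdjoint_iff_isSymmetric.mp hE) x y
  have hEsq : ∀ w : H, E (E w) = E w := fun w => by
    have := congrArg (fun T : H →L[ℂ] H => T w) hE2
    simpa using this
  -- ⟪w, E w⟫ has real part ‖E w‖²
  have hnorm : ∀ w : H, Complex.re ⟪w, E w⟫_ℂ = ‖E w‖ ^ 2 := by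
    intro w
    have h1 : ⟪w, E w⟫_ℂ = ⟪E w, E w⟫_ℂ := by
      rw [hsym w (E w), hEsq]
    rw [h1]
    exact inner_self_eq_norm_sq (𝕜 := ℂ) (E w)
  -- unitaries preserve norms
  have hUnorm : ∀ (U : H →L[ℂ] H), star U * U = 1 → ∀ y : H, ‖U y‖ = ‖y‖ := by
    intro U hU y
    have h1 : ⟪U y, U y⟫_ℂ = ⟪y, y⟫_ℂ := by
      rw [← ContinuousLinearMap.adjoint_inner_left, ← ContinuousLinearMap.star_eq_adjoint]
      have : star U (U y) = y := by
        have := congrArg (fun T : H →L[ℂ] H => T y) hU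
        simpa using this
      rw [this]
    have h2 := congrArg Complex.re h1
    have ha : Complex.re ⟪U y, U y⟫_ℂ = ‖U y‖ ^ 2 := inner_self_eq_norm_sq (𝕜 := ℂ) _
    have hb : Complex.re ⟪y, y⟫_ℂ = ‖y‖ ^ 2 := inner_self_eq_norm_sq (𝕜 := ℂ) _
    rw [ha, hb] at h2
    nlinarith [norm_nonneg (U y), norm_nonneg y]
  -- Pythagoras for the projection E
  have hpyth : ∀ w : H, ‖w‖ ^ 2 = ‖E w‖ ^ 2 + ‖w - E w‖ ^ 2 := by
    intro w
    have horth : ⟪E w, w - E w⟫_ℂ = 0 := by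
      rw [inner_sub_right, hsym w (E w), hEsq, hsym w w, sub_self]
    have : ‖E w + (w - E w)‖ ^ 2 =
        ‖E w‖ ^ 2 + 2 * Complex.re ⟪E w, w - E w⟫_ℂ + ‖w - E w‖ ^ 2 :=
      norm_add_sq (𝕜 := ℂ) (E w) (w - E w)
    rw [horth] at this
    simpa using this
  -- the key scalar identity
  have key : ∀ x : H, ‖E (U₁ x)‖ ^ 2 + ‖E (U₂ x)‖ ^ 2 = 2 * Complex.re ⟪x, E x⟫_ℂ := by
    intro x
    have h0 : star U₁ (E (U₁ x)) + star U₂ (E (U₂ x)) = (2 : ℂ) • E x := by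
      have := congrArg (fun T : H →L[ℂ] H => T x) h
      simpa using this
    have h1 : ⟪x, star U₁ (E (U₁ x)) + star U₂ (E (U₂ x))⟫_ℂ = ⟪x, (2 : ℂ) • E x⟫_ℂ := by
      rw [h0]
    rw [inner_add_right, inner_smul_right] at h1
    have h2 : ∀ (U : H →L[ℂ] H) (y : H), ⟪x, star U (E (U x))⟫_ℂ = ⟪U x, E (U x)⟫_ℂ := by
      intro U y
      rw [ContinuousLinearMap.star_eq_adjoint, ContinuousLinearMap.adjoint_inner_right]
    rw [h2 U₁ x, h2 U₂ x] at h1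
    have h3 := congrArg Complex.re h1
    simp only [Complex.add_re, Complex.mul_re] at h3
    rw [hnorm (U₁ x), hnorm (U₂ x)] at h3
    simpa using h3
  -- E fixes U i (E v)
  have hfix : ∀ v : H, E (U₁ (E v)) = U₁ (E v) ∧ E (U₂ (E v)) = U₂ (E v) := by
    intro v
    have hk := key (E v)
    rw [hEsq v] at hk
    have hself : Complex.re ⟪E v, E v⟫_ℂ = ‖E v‖ ^ 2 := inner_self_eq_norm_sq (𝕜 := ℂ) _
    rw [hself] at hk
    have hp1 := hpyth (U₁ (E v))
    have hp2 := hpyth (U₂ (E v))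
    rw [hUnorm U₁ hU₁ (E v)] at hp1
    rw [hUnorm U₂ hU₂ (E v)] at hp2
    have hz : ‖U₁ (E v) - E (U₁ (E v))‖ ^ 2 + ‖U₂ (E v) - E (U₂ (E v))‖ ^ 2 = 0 := by
      nlinarith
    constructor
    · have : ‖U₁ (E v) - E (U₁ (E v))‖ = 0 := by
        nlinarith [sq_nonneg ‖U₁ (E v) - E (U₁ (E v))‖, sq_nonneg ‖U₂ (E v) - E (U₂ (E v))‖,
          norm_nonneg (U₁ (E v) - E (U₁ (E v)))]
      have := norm_eq_zero.mp this
      rw [sub_eq_zero] at this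
      exact this.symm
    · have : ‖U₂ (E v) - E (U₂ (E v))‖ = 0 := by
        nlinarith [sq_nonneg ‖U₁ (E v) - E (U₁ (E v))‖, sq_nonneg ‖U₂ (E v) - E (U₂ (E v))‖,
          norm_nonneg (U₂ (E v) - E (U₂ (E v)))]
      have := norm_eq_zero.mp this
      rw [sub_eq_zero] at this
      exact this.symm
  -- E kills U i (v - E v)
  have hkill : ∀ v : H, E (U₁ (v - E v)) = 0 ∧ E (U₂ (v - E v)) = 0 := by
    intro v
    have hk := key (v - E v)
    have hEz : E (v - E v) = 0 := by
      rw [map_sub, hEsq, sub_self]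
    rw [hEz] at hk
    simp only [inner_zero_right, Complex.zero_re, mul_zero] at hk
    constructor
    · have : ‖E (U₁ (v - E v))‖ = 0 := by
        nlinarith [norm_nonneg (E (U₁ (v - E v))), norm_nonneg (E (U₂ (v - E v)))]
      exact norm_eq_zero.mp this
    · have : ‖E (U₂ (v - E v))‖ = 0 := by
        nlinarith [norm_nonneg (E (U₁ (v - E v))), norm_nonneg (E (U₂ (v - E v)))]
      exact norm_eq_zero.mp this
  constructor
  · ext v
    have h1 := (hfix v).1
    have h2 := (hkill v).1
    have hv : E v + (v - E v) = v := by abel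
    have : E (U₁ v) = E (U₁ (E v)) + E (U₁ (v - E v)) := by
      conv_lhs => rw [← hv]
      rw [map_add, map_add]
    simp only [ContinuousLinearMap.mul_apply]
    rw [this, h1, h2, add_zero]
  · ext v
    have h1 := (hfix v).2
    have h2 := (hkill v).2
    have hv : E v + (v - E v) = v := by abel
    have : E (U₂ v) = E (U₂ (E v)) + E (U₂ (v - E v)) := by
      conv_lhs => rw [← hv]
      rw [map_add, map_add]
    simp only [ContinuousLinearMap.mul_apply]
    rw [this, h1, h2, add_zero]
end

section
/- Let H be a complex Hilbert space and let (A_n)_{n ∈ ℕ} be a sequence of positive operators in B(H) such that for every x ∈ H the series ∑_n A_n x converges in H to x (i.e., ∑_n A_n = 1 in the strong operator topology). Let Φ : B(H) → B(H) be the associated Lüders operation in the Heisenberg picture, i.e., the linear map satisfying ⟪Φ(S) x, y⟫ = ∑'_n ⟪S (A_n^{1/2} x), A_n^{1/2} y⟫ for all S ∈ B(H) and x, y ∈ H, where A_n^{1/2} denotes the positive square root of A_n and each such scalar family is summable. Let B ∈ B(H) satisfy Φ(B) = B. Then the following are equivalent: (i) B ∘ A_n = A_n ∘ B for every n; (ii)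 Φ(B*B) = B*B and Φ(BB*) = BB*; (iii) Φ(b) = b for every b ∈ C*(1,B). -/
/-!
If `Φ B = B` and `Φ (B* B) = B* B`, then for every `x` the vectors `u i = B (R i x)` and
`v i = R i (B x)` satisfy `∑ ⟪u i, u i⟫ = ∑ ⟪u i, v i⟫ = ∑ ⟪v i, v i⟫ = ‖B x‖²`, so
`∑ ‖u i - v i‖² = 0` and `B` commutes with every `R i`, hence with `A i = R i²`.
Conversely, if `B` commutes with `A i`, it commutes with its square root `R i`, and then so
does all of `C*(1, B)`, which lies in the bicommutant of `{B}`. Every operator commuting with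
all `R i` is fixed by `Φ`, because `∑ R i² = 1` strongly.
-/

open scoped InnerProductSpace

theorem Commute.of_mem_elemental {R A : Type*} [CommSemiring R] [StarRing R]
    [TopologicalSpace A] [Semiring A] [StarRing A] [IsSemitopologicalSemiring A]
    [ContinuousStar A] [Algebra R A] [StarModule R A] [T2Space A] {a b r : A}
    (hr : IsSelfAdjoint r) (har : Commute a r) (hb : b ∈ StarAlgebra.elemental R a) :
    Commute b r := by
  have hr_mem : r ∈ StarSubalgebra.centralizer R {a} := by
    rw [StarSubalgebra.mem_centralizer_iff]
    rintro _ rfl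
    exact ⟨har.eq, by simpa [hr.star_eq] using congrArg star har.eq.symm⟩
  exact ((StarSubalgebra.mem_centralizer_iff R).mp
    (StarAlgebra.elemental.le_centralizer_centralizer R a hb) r hr_mem).1.symm

theorem Commute.of_mul_self_right {A : Type*} [CStarAlgebra A] [PartialOrder A]
    [StarOrderedRing A] {b r : A} (hr : 0 ≤ r) (h : Commute b (r * r)) : Commute b r := by
  rw [← CFC.sqrt_mul_self r, CFC.sqrt_eq_cfc]
  exact (h.symm.cfc_nnreal _).symm

open ComplexConjugate in
theorem eq_of_hasSum_inner_self_of_hasSum_inner {𝕜 E ι : Type*} [RCLike 𝕜]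
    [NormedAddCommGroup E] [InnerProductSpace 𝕜 E] {u v : ι → E} {c : 𝕜}
    (huu : HasSum (fun i => ⟪u i, u i⟫_𝕜) c) (huv : HasSum (fun i => ⟪u i, v i⟫_𝕜) c)
    (hvv : HasSum (fun i => ⟪v i, v i⟫_𝕜) c) : u = v := by
  have hc : conj c = c :=
    ((RCLike.hasSum_conj' 𝕜).mpr huu |>.congr_fun fun i => (inner_self_conj _).symm).unique huu
  have hvu : HasSum (fun i => ⟪v i, u i⟫_𝕜) c := by
    simpa only [inner_conj_symm, hc] using (RCLike.hasSum_conj' 𝕜).mpr huv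
  have hzero : (fun i => ‖u i - v i‖ ^ 2) = 0 := by
    refine (hasSum_zero_iff_of_nonneg (L := .unconditional ι) fun i => sq_nonneg _).mp
      ((RCLike.hasSum_ofReal 𝕜).mp ?_)
    have h := ((huu.sub huv).sub hvu).add hvv
    rw [show c - c - c + c = ((0 : ℝ) : 𝕜) by simp] at h
    refine h.congr_fun fun i => ?_
    rw [RCLike.ofReal_pow, ← inner_self_eq_norm_sq_to_K, inner_sub_sub_self]
  funext i
  simpa [sub_eq_zero] using congrFun hzero i

section LuedersOperation

variable {𝕜 H ι : Type*} [RCLike 𝕜] [NormedAddCommGroup H] [InnerProductSpace 𝕜 H]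
  {A R : ι → H →L[𝕜] H}

variable (R) in
def IsLuedersOperation (Φ : (H →L[𝕜] H) → H →L[𝕜] H) : Prop :=
  ∀ (S : H →L[𝕜] H) (x y : H), HasSum (fun i => ⟪S (R i x), R i y⟫_𝕜) ⟪Φ S x, y⟫_𝕜

variable [CompleteSpace H] {Φ : (H →L[𝕜] H) → H →L[𝕜] H}

theorem hasSum_inner_apply_apply_of_hasSum (hR : ∀ i, IsSelfAdjoint (R i))
    (hR2 : ∀ i, R i * R i = A i) (hA : ∀ x, HasSum (fun i => A i x) x) (x y : H) :
    HasSum (fun i => ⟪R i x, R i y⟫_𝕜) ⟪x, y⟫_𝕜 := by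
  convert (RCLike.hasSum_conj' 𝕜).mpr ((hA x).mapL (innerSL 𝕜 y)) using 1
  · ext i
    rw [innerSL_apply_apply, inner_conj_symm, ← hR2, mul_apply_eq_comp]
    exact ((hR i).isSymmetric (R i x) y).symm
  · rw [innerSL_apply_apply, inner_conj_symm]

theorem IsLuedersOperation.apply_eq_self_of_commute (hΦ : IsLuedersOperation R Φ)
    (hR : ∀ i, IsSelfAdjoint (R i)) (hR2 : ∀ i, R i * R i = A i)
    (hA : ∀ x, HasSum (fun i => A i x) x) {S : H →L[𝕜] H} (hS : ∀ i, Commute S (R i)) :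
    Φ S = S := by
  ext x
  refine ext_inner_right 𝕜 fun y => (hΦ S x y).unique ?_
  simpa only [← mul_apply_eq_comp, (hS _).eq] using
    hasSum_inner_apply_apply_of_hasSum hR hR2 hA (S x) y

theorem IsLuedersOperation.commute_of_apply_eq_self (hΦ : IsLuedersOperation R Φ)
    (hR : ∀ i, IsSelfAdjoint (R i)) (hR2 : ∀ i, R i * R i = A i)
    (hA : ∀ x, HasSum (fun i => A i x) x) {B : H →L[𝕜] H} (hB : Φ B = B)
    (hBB : Φ (star B * B) = star B * B) (i : ι) : Commute B (R i) := by
  suffices h : ∀ x, (fun i => B (R i x)) = fun i => R i (B x) by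
    ext x
    exact congrFun (h x) i
  intro x
  refine eq_of_hasSum_inner_self_of_hasSum_inner (c := ⟪B x, B x⟫_𝕜) ?_ ?_
    (hasSum_inner_apply_apply_of_hasSum hR hR2 hA (B x) (B x))
  · have h := hΦ (star B * B) x x
    rw [hBB] at h
    simpa only [mul_apply_eq_comp, ContinuousLinearMap.star_eq_adjoint,
      ContinuousLinearMap.adjoint_inner_left] using h
  · simpa only [hB] using hΦ B x (B x)

end LuedersOperation

theorem lueders_fixed_point_propagation_general {H : Type*}
    [NormedAddCommGroup H] [InnerProductSpace ℂ H] [CompleteSpace H]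
    (A : ℕ → (H →L[ℂ] H))
    (hAsum : ∀ x : H, HasSum (fun n => A n x) x)
    (R : ℕ → (H →L[ℂ] H)) (hR : ∀ n, (R n).IsPositive) (hR2 : ∀ n, R n * R n = A n)
    (Φ : (H →L[ℂ] H) →ₗ[ℂ] (H →L[ℂ] H))
    (hsummable : ∀ (S : H →L[ℂ] H) (x y : H),
      Summable fun n => ⟪S (R n x), R n y⟫_ℂ)
    (hΦ : ∀ (S : H →L[ℂ] H) (x y : H),
      ⟪Φ S x, y⟫_ℂ = ∑' n, ⟪S (R n x), R n y⟫_ℂ)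
    (B : H →L[ℂ] H) (hB : Φ B = B) :
    List.TFAE
      [∀ n, B * A n = A n * B,
       Φ (star B * B) = star B * B ∧ Φ (B * star B) = B * star B,
       ∀ b ∈ StarAlgebra.elemental ℂ B, Φ b = b] := by
  have hLueders : IsLuedersOperation R Φ := fun S x y => hΦ S x y ▸ (hsummable S x y).hasSum
  have hRsa n : IsSelfAdjoint (R n) := (hR n).isSelfAdjoint
  have hB_mem : B ∈ StarAlgebra.elemental ℂ B := StarAlgebra.elemental.self_mem ℂ B
  tfae_have 2 → 1 := fun h n => by
    have hc := hLueders.commute_of_apply_eq_self hRsa hR2 hAsum hB h.1 n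
    exact hR2 n ▸ (hc.mul_right hc).eq
  tfae_have 1 → 3 := fun h b hb => by
    refine hLueders.apply_eq_self_of_commute hRsa hR2 hAsum fun n => ?_
    have hc : Commute B (R n * R n) := hR2 n ▸ h n
    have hR_nonneg : 0 ≤ R n := (ContinuousLinearMap.nonneg_iff_isPositive _).mpr (hR n)
    exact (hc.of_mul_self_right hR_nonneg).of_mem_elemental (hRsa n) hb
  tfae_have 3 → 2 := fun h =>
    ⟨h _ (mul_mem (star_mem hB_mem) hB_mem), h _ (mul_mem hB_mem (star_mem hB_mem))⟩
  tfae_finish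

/-- **Proposition 1.1 (fixed points of Lüders operations).** Let `(A_n)` be a sequence of
positive operators on `H` with `∑ A_n = 1` in the strong operator topology, let `R n` be
the positive square root of `A n`, and let `Φ` be the associated Lüders operation in the
Heisenberg picture, `⟪Φ(S) x, y⟫ = ∑' n, ⟪S (A_n^{1/2} x), A_n^{1/2} y⟫`. If `B ∈ B(H)`
is a fixed point of `Φ`, then the following are equivalent:
(i) `B` commutes with every `A_n`;
(ii) `B*B` and `BB*` are fixed points of `Φ`;
(iii) every element of `C*(1,B)` is fixed by `Φ`. -/
theorem lueders_fixed_point_propagation {H : Type*}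
    [NormedAddCommGroup H] [InnerProductSpace ℂ H] [CompleteSpace H]
    (A : ℕ → (H →L[ℂ] H)) (hA : ∀ n, (A n).IsPositive)
    (hAsum : ∀ x : H, HasSum (fun n => A n x) x)
    (R : ℕ → (H →L[ℂ] H)) (hR : ∀ n, (R n).IsPositive) (hR2 : ∀ n, R n * R n = A n)
    (Φ : (H →L[ℂ] H) →ₗ[ℂ] (H →L[ℂ] H))
    (hsummable : ∀ (S : H →L[ℂ] H) (x y : H),
      Summable fun n => ⟪S (R n x), R n y⟫_ℂ)
    (hΦ : ∀ (S : H →L[ℂ] H) (x y : H),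
      ⟪Φ S x, y⟫_ℂ = ∑' n, ⟪S (R n x), R n y⟫_ℂ)
    (B : H →L[ℂ] H) (hB : Φ B = B) :
    List.TFAE
      [∀ n, B * A n = A n * B,
       Φ (star B * B) = star B * B ∧ Φ (B * star B) = B * star B,
       ∀ b ∈ StarAlgebra.elemental ℂ B, Φ b = b] :=
  lueders_fixed_point_propagation_general A hAsum R hR hR2 Φ hsummable hΦ B hB
end

section
/- Let Γ be the free group on two generators g₁, g₂, let H = ℓ²(Γ; ℂ), and for j = 1, 2 let U_j ∈ B(H) be the unitary operator induced by left translation by g_j (so U_j δ_x = δ_{g_j x} for the canonical basis vectors δ_x, x ∈ Γ). Define the bounded linear map ψ : B(H) → B(H) by ψ(T) = U₁* ∘ T ∘ U₁ + U₂* ∘ T ∘ U₂ − 2T, and for t ≥ 0 let Φ_t = exp(t • ψ), the exponential taken in the Banach algebra of bounded linear operators on B(H). Then there exists a positive operator A ∈ B(H) such that Φ_t(A) = A for all t ≥ 0, while Φ_{t₀}(A ∘ A) ≠ A ∘ A for some t₀ ≥ 0; consequently the set of joint fixed points {T ∈ B(H) : Φ_t(T) = T for all t ≥ 0} is not closed under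 multiplication. -/
/-!
A bounded operator `B` is fixed by every `Φ_t` iff `ψ B = 0`: the orbit `t ↦ Φ_t B` has
derivative `Φ_t (ψ B)` at `t`. Conjugating the multiplication operator by a bounded function `c`
with `U_j` gives the multiplication operator by `c (g_j ·)`, so `ψ` maps it to the multiplication
operator by `Δc(x) = c(g₁x) + c(g₂x) - 2c(x)`. It therefore suffices to find a bounded
nonnegative `f` with `Δf = 0` and `Δ(f²) ≠ 0`. Take `f x = 2, 0, 1` according as the reduced
word of `x` ends in `g₁ = of 0`, ends in `g₂ = of 1`, or otherwise: left multiplication by a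
generator does not change the last letter of a reduced word of length at least two, and the
short words are checked by hand; on the other hand `Δ(f²)(1) = 4 + 0 - 2`.
-/

set_option synthInstance.maxHeartbeats 1000000
set_option maxHeartbeats 2000000

/-- The free group on two generators. -/
abbrev FreeGroupTwo := FreeGroup (Fin 2)

/-- The Hilbert space `ℓ²` of the free group on two generators. -/
noncomputable abbrev L2FreeGroupTwo := lp (fun _ : FreeGroupTwo => ℂ) 2

/-- The norm topology on bounded operators on `B(ℓ²(F₂))` makes it a topological ring
(helper instance, needed to speak of the exponential `exp (t ψ)`). -/
noncomputable instance : IsTopologicalRing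
    ((L2FreeGroupTwo →L[ℂ] L2FreeGroupTwo) →L[ℂ] (L2FreeGroupTwo →L[ℂ] L2FreeGroupTwo)) :=
  @NonUnitalSeminormedRing.toIsTopologicalRing
    ((L2FreeGroupTwo →L[ℂ] L2FreeGroupTwo) →L[ℂ] (L2FreeGroupTwo →L[ℂ] L2FreeGroupTwo)) _

open scoped ENNReal

namespace lp

section NontriviallyNormedField

variable {ι 𝕜 : Type*} [NontriviallyNormedField 𝕜] {p : ℝ≥0∞} [Fact (1 ≤ p)]

noncomputable def diagonal (c : lp (fun _ : ι => 𝕜) ∞) :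
    lp (fun _ : ι => 𝕜) p →L[𝕜] lp (fun _ : ι => 𝕜) p :=
  lp.mapCLM p (fun i => ContinuousLinearMap.mul 𝕜 𝕜 (c i)) (norm_nonneg c) fun i =>
    (ContinuousLinearMap.opNorm_mul_apply_le 𝕜 𝕜 (c i)).trans (lp.norm_apply_le_norm (by simp) c i)

@[simp]
theorem diagonal_apply (c : lp (fun _ : ι => 𝕜) ∞) (u : lp (fun _ : ι => 𝕜) p) (i : ι) :
    diagonal c u i = c i * u i :=
  rfl

variable [DecidableEq ι]

def IsDiagonal (T : lp (fun _ : ι => 𝕜) p →L[𝕜] lp (fun _ : ι => 𝕜) p) (c : ι → 𝕜) : Prop :=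
  ∀ i, T (lp.single p i 1) = c i • lp.single p i 1

namespace IsDiagonal

variable {T S : lp (fun _ : ι => 𝕜) p →L[𝕜] lp (fun _ : ι => 𝕜) p} {c d : ι → 𝕜}

theorem add (hT : IsDiagonal T c) (hS : IsDiagonal S d) : IsDiagonal (T + S) (c + d) := fun i => by
  simp [hT i, hS i, add_smul]

theorem sub (hT : IsDiagonal T c) (hS : IsDiagonal S d) : IsDiagonal (T - S) (c - d) := fun i => by
  simp [hT i, hS i, sub_smul]

theorem const_smul (hT : IsDiagonal T c) (a : 𝕜) : IsDiagonal (a • T) (a • c) := fun i => by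
  simp [hT i, smul_smul]

theorem mul (hT : IsDiagonal T c) (hS : IsDiagonal S d) : IsDiagonal (T * S) (c * d) := fun i => by
  simp [hS i, hT i, smul_smul, mul_comm]

theorem conj {U V : lp (fun _ : ι => 𝕜) p →L[𝕜] lp (fun _ : ι => 𝕜) p} {σ : ι → ι}
    (hVU : V * U = 1) (hU : ∀ i, U (lp.single p i 1) = lp.single p (σ i) 1)
    (hT : IsDiagonal T c) : IsDiagonal (V * T * U) (c ∘ σ) := fun i => by
  have hV : V (lp.single p (σ i) 1) = lp.single p i 1 := by
    simpa [hU] using DFunLike.congr_fun hVU (lp.single p i 1)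
  simp [hU i, hT (σ i), hV]

theorem eq_zero_iff (hp : p ≠ ∞) (hT : IsDiagonal T c) : T = 0 ↔ c = 0 := by
  constructor
  · rintro rfl
    funext i
    simpa using congr(⇑$((hT i).symm) i)
  · rintro rfl
    refine lp.ext_continuousLinearMap hp fun i => ContinuousLinearMap.ext_ring ?_
    simp [hT i]

end IsDiagonal

theorem isDiagonal_diagonal (c : lp (fun _ : ι => 𝕜) ∞) :
    IsDiagonal (diagonal (p := p) c) c := fun i => by
  ext j
  by_cases h : j = i
  · subst h; simp
  · simp [lp.single_apply, h]

end NontriviallyNormedField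

open scoped ComplexOrder in
theorem isPositive_diagonal {ι 𝕜 : Type*} [RCLike 𝕜] {c : lp (fun _ : ι => 𝕜) ∞}
    (hc : ∀ i, 0 ≤ c i) : (diagonal (p := 2) c).IsPositive := by
  have hconj (i : ι) : (starRingEnd 𝕜) (c i) = c i :=
    RCLike.conj_eq_iff_im.2 (RCLike.nonneg_iff.1 (hc i)).2
  rw [ContinuousLinearMap.isPositive_iff]
  refine ⟨fun u w => ?_, fun u => ?_⟩
  · simp only [ContinuousLinearMap.coe_coe, lp.inner_eq_tsum, diagonal_apply, RCLike.inner_apply,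
      map_mul, hconj]
    exact tsum_congr fun i => by ring
  · rw [lp.inner_eq_tsum]
    refine tsum_nonneg fun i => ?_
    rw [diagonal_apply, RCLike.inner_apply, map_mul, hconj, mul_left_comm, RCLike.mul_conj]
    exact mul_nonneg (hc i) (pow_nonneg (RCLike.ofReal_nonneg.2 (norm_nonneg _)) 2)

end lp

section SemigroupFixedPoints

variable {E : Type*} [NormedAddCommGroup E] [NormedSpace ℂ E] [CompleteSpace E]

theorem hasDerivAt_exp_ofReal_smul_apply (ψ : E →L[ℂ] E) (B : E) (t : ℝ) :
    HasDerivAt (fun s : ℝ => NormedSpace.exp ((s : ℂ) • ψ) B)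
      (NormedSpace.exp ((t : ℂ) • ψ) (ψ B)) t := by
  simp only [Complex.coe_smul]
  exact ((ContinuousLinearMap.apply ℂ E B).restrictScalars ℝ).hasFDerivAt.comp_hasDerivAt t
    (hasDerivAt_exp_smul_const (𝕂 := ℝ) ψ t)

theorem forall_exp_smul_apply_eq_self_iff (ψ : E →L[ℂ] E) (B : E) :
    (∀ t : ℝ, 0 ≤ t → NormedSpace.exp ((t : ℂ) • ψ) B = B) ↔ ψ B = 0 := by
  constructor
  · intro h
    have hψ : HasDerivWithinAt (fun s : ℝ => NormedSpace.exp ((s : ℂ) • ψ) B) (ψ B)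
        (Set.Ici 0) 0 := by
      simpa using (hasDerivAt_exp_ofReal_smul_apply ψ B 0).hasDerivWithinAt
    have hconst : HasDerivWithinAt (fun s : ℝ => NormedSpace.exp ((s : ℂ) • ψ) B) 0 (Set.Ici 0) 0 :=
      (hasDerivWithinAt_const _ _ B).congr (fun t ht => h t ht) (h 0 le_rfl)
    exact (uniqueDiffOn_Ici 0 0 Set.self_mem_Ici).eq_deriv _ hψ hconst
  · intro h t _
    have hd (s : ℝ) := hasDerivAt_exp_ofReal_smul_apply ψ B s
    simp only [h, map_zero] at hd
    simpa using is_const_of_deriv_eq_zero (fun s => (hd s).differentiableAt)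
      (fun s => (hd s).deriv) t 0

end SemigroupFixedPoints

theorem FreeGroup.toWord_of_mul {α : Type*} [DecidableEq α] (a : α) (x : FreeGroup α) :
    (FreeGroup.of a * x).toWord = FreeGroup.reduce ((a, true) :: x.toWord) := by
  rw [FreeGroup.toWord_mul, FreeGroup.toWord_of]
  rfl

namespace FreeGroupTwo

def lastLetterWeight : Option (Fin 2 × Bool) → ℝ
  | some (0, true) => 2
  | some (1, true) => 0
  | _ => 1

def harmonicWeight (x : FreeGroupTwo) : ℝ := lastLetterWeight x.toWord.getLast?

theorem harmonicWeight_mem_Icc (x : FreeGroupTwo) : harmonicWeight x ∈ Set.Icc 0 2 := by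
  unfold harmonicWeight lastLetterWeight; split <;> norm_num

theorem harmonicWeight_of_zero_mul_add_of_one_mul (x : FreeGroupTwo) :
    harmonicWeight (FreeGroup.of 0 * x) + harmonicWeight (FreeGroup.of 1 * x) =
      2 * harmonicWeight x := by
  simp only [harmonicWeight, FreeGroup.toWord_of_mul, FreeGroup.reduce.cons,
    FreeGroup.reduce_toWord]
  rcases x.toWord with _ | ⟨⟨i, b⟩, _ | ⟨a, L⟩⟩
  · norm_num [lastLetterWeight]
  · fin_cases i <;> cases b <;> norm_num [lastLetterWeight]
  · dsimp only
    split_ifs <;> simp only [List.getLast?_cons_cons] <;> ring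

theorem memℓp_harmonicWeight : Memℓp (fun x => (harmonicWeight x : ℂ)) ∞ :=
  memℓp_infty ⟨2, by
    rintro _ ⟨x, rfl⟩
    simpa [abs_of_nonneg (harmonicWeight_mem_Icc x).1] using (harmonicWeight_mem_Icc x).2⟩

@[simp]
theorem harmonicWeight_one : harmonicWeight 1 = 1 := rfl

@[simp]
theorem harmonicWeight_of_zero : harmonicWeight (FreeGroup.of 0) = 2 := rfl

@[simp]
theorem harmonicWeight_of_one : harmonicWeight (FreeGroup.of 1) = 0 := rfl

end FreeGroupTwo

open FreeGroupTwo in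
theorem constants_not_closed_under_multiplication_general
    (U : Fin 2 → (L2FreeGroupTwo →L[ℂ] L2FreeGroupTwo))
    (hUiso : ∀ j, star (U j) * U j = 1)
    (hUact : ∀ (j : Fin 2) (x : FreeGroupTwo),
      U j (lp.single 2 x (1 : ℂ)) = lp.single 2 (FreeGroup.of j * x) (1 : ℂ))
    (ψ : (L2FreeGroupTwo →L[ℂ] L2FreeGroupTwo) →L[ℂ]
         (L2FreeGroupTwo →L[ℂ] L2FreeGroupTwo))
    (hψ : ∀ T : L2FreeGroupTwo →L[ℂ] L2FreeGroupTwo,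
      ψ T = star (U 0) * T * U 0 + star (U 1) * T * U 1 - (2 : ℂ) • T) :
    ∃ A : L2FreeGroupTwo →L[ℂ] L2FreeGroupTwo, A.IsPositive ∧
      (∀ t : ℝ, 0 ≤ t → NormedSpace.exp ((t : ℂ) • ψ) A = A) ∧
      (∃ t₀ : ℝ, 0 ≤ t₀ ∧ NormedSpace.exp ((t₀ : ℂ) • ψ) (A * A) ≠ A * A) ∧
      ¬ (∀ S T : L2FreeGroupTwo →L[ℂ] L2FreeGroupTwo,
          (∀ t : ℝ, 0 ≤ t → NormedSpace.exp ((t : ℂ) • ψ) S = S) →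
          (∀ t : ℝ, 0 ≤ t → NormedSpace.exp ((t : ℂ) • ψ) T = T) →
          (∀ t : ℝ, 0 ≤ t → NormedSpace.exp ((t : ℂ) • ψ) (S * T) = S * T)) := by
  have hψ_diag {B : L2FreeGroupTwo →L[ℂ] L2FreeGroupTwo} {c : FreeGroupTwo → ℂ}
      (hB : lp.IsDiagonal B c) : lp.IsDiagonal (ψ B)
        (c ∘ (FreeGroup.of 0 * ·) + c ∘ (FreeGroup.of 1 * ·) - (2 : ℂ) • c) := by
    rw [hψ]
    exact ((hB.conj (hUiso 0) (hUact 0)).add (hB.conj (hUiso 1) (hUact 1))).sub (hB.const_smul 2)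
  set A : L2FreeGroupTwo →L[ℂ] L2FreeGroupTwo := lp.diagonal ⟨_, memℓp_harmonicWeight⟩
  have hA : lp.IsDiagonal A (fun x => (harmonicWeight x : ℂ)) := lp.isDiagonal_diagonal _
  have hψA : ψ A = 0 := ((hψ_diag hA).eq_zero_iff ENNReal.ofNat_ne_top).2 <| funext fun x => by
    have h := congrArg ((↑) : ℝ → ℂ) (harmonicWeight_of_zero_mul_add_of_one_mul x)
    push_cast at h
    simp only [Pi.add_apply, Pi.sub_apply, Pi.smul_apply, Function.comp_apply, smul_eq_mul,
      Pi.zero_apply]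
    linear_combination h
  have hψAA : ψ (A * A) ≠ 0 := fun h => by
    have h1 := congr_fun (((hψ_diag (hA.mul hA)).eq_zero_iff ENNReal.ofNat_ne_top).1 h) 1
    norm_num at h1
  have hA_fixed := (forall_exp_smul_apply_eq_self_iff ψ A).2 hψA
  refine ⟨A, lp.isPositive_diagonal fun x => ?_, hA_fixed, ?_, fun h => ?_⟩
  · exact Complex.zero_le_real.2 ((harmonicWeight_mem_Icc x).1)
  · by_contra! h
    exact hψAA ((forall_exp_smul_apply_eq_self_iff ψ _).1 h)
  · exact hψAA ((forall_exp_smul_apply_eq_self_iff ψ _).1 (h A A hA_fixed hA_fixed))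

/-- **Theorem 5.8 / Example 5.7.** On `H = ℓ²(F₂)`, with `U₁, U₂` the unitaries of left
translation by the two generators, consider the bounded map
`ψ(T) = U₁* T U₁ + U₂* T U₂ − 2T` on `B(H)` and the norm-continuous semigroup
`Φ_t = exp(t ψ)`. Then there is a positive operator `A` which is a joint fixed point of
the semigroup while `A ∘ A` is not; consequently the set of joint fixed points (the set
of constants of the dynamical quantum system) is not closed under multiplication. -/
theorem constants_not_closed_under_multiplication
    (U : Fin 2 → (L2FreeGroupTwo →L[ℂ] L2FreeGroupTwo))
    (hUiso : ∀ j, star (U j) * U j = 1) (hUco : ∀ j, U j * star (U j) = 1)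
    (hUact : ∀ (j : Fin 2) (x : FreeGroupTwo),
      U j (lp.single 2 x (1 : ℂ)) = lp.single 2 (FreeGroup.of j * x) (1 : ℂ))
    (ψ : (L2FreeGroupTwo →L[ℂ] L2FreeGroupTwo) →L[ℂ]
         (L2FreeGroupTwo →L[ℂ] L2FreeGroupTwo))
    (hψ : ∀ T : L2FreeGroupTwo →L[ℂ] L2FreeGroupTwo,
      ψ T = star (U 0) * T * U 0 + star (U 1) * T * U 1 - (2 : ℂ) • T) :
    ∃ A : L2FreeGroupTwo →L[ℂ] L2FreeGroupTwo, A.IsPositive ∧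
      (∀ t : ℝ, 0 ≤ t → NormedSpace.exp ((t : ℂ) • ψ) A = A) ∧
      (∃ t₀ : ℝ, 0 ≤ t₀ ∧ NormedSpace.exp ((t₀ : ℂ) • ψ) (A * A) ≠ A * A) ∧
      ¬ (∀ S T : L2FreeGroupTwo →L[ℂ] L2FreeGroupTwo,
          (∀ t : ℝ, 0 ≤ t → NormedSpace.exp ((t : ℂ) • ψ) S = S) →
          (∀ t : ℝ, 0 ≤ t → NormedSpace.exp ((t : ℂ) • ψ) T = T) →
          (∀ t : ℝ, 0 ≤ t → NormedSpace.exp ((t : ℂ) • ψ) (S * T) = S * T)) :=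
  constants_not_closed_under_multiplication_general U hUiso hUact ψ hψ
end
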